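/- arXiv:1412.5545 — 17 statements merged into one kernel-verified Lean document; each statement's English description precedes it below -/
import Mathlib

section
/- Let x̂ be a discrete-time signal, t : ℕ → ℝ a strictly increasing sequence with t k → ∞, and let x : ℝ → B^n be the interpolation of x̂ along (t_k). Then Or(x̂) = Or(x) and ω̂(x̂) = ω(x). -/
open Set Filter

/-- The omega limit set of a discrete-time signal. -/
def omegaD {n : ℕ} (xd : ℤ → Fin n → Bool) : Set (Fin n → Bool) :=
  {μ | {k : ℤ | -1 ≤ k ∧ xd k = μ}.Infinite}

/-- The omega limit set of a real-time signal. -/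
def omegaR {n : ℕ} (x : ℝ → Fin n → Bool) : Set (Fin n → Bool) :=
  {μ | ¬ BddAbove {t : ℝ | x t = μ}}

/-- If `x` is the interpolation of the discrete-time signal `xd` along a strictly
increasing unbounded sequence `ts`, then the orbits coincide and the omega limit
sets coincide. -/
theorem orbit_omega_of_interpolation {n : ℕ} (xd : ℤ → Fin n → Bool)
    (x : ℝ → Fin n → Bool) (ts : ℕ → ℝ)
    (hmono : StrictMono ts) (htop : Tendsto ts atTop atTop)
    (hinit : ∀ s, s < ts 0 → x s = xd (-1))
    (hstep : ∀ k : ℕ, ∀ s, ts k ≤ s → s < ts (k + 1) → x s = xd k) :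
    {μ | ∃ k : ℤ, -1 ≤ k ∧ xd k = μ} = Set.range x ∧ omegaD xd = omegaR x := by
  -- value at the sample points
  have hx : ∀ k : ℕ, x (ts k) = xd k := fun k =>
    hstep k _ le_rfl (hmono (Nat.lt_succ_self k))
  -- existence of the interval containing s
  have hint : ∀ s : ℝ, ts 0 ≤ s → ∃ k : ℕ, ts k ≤ s ∧ s < ts (k + 1) := by
    intro s hs
    have hex : ∃ N : ℕ, s < ts N := (htop.eventually (eventually_gt_atTop s)).exists
    classical
    have hKpos : Nat.find hex ≠ 0 := by
      intro h0
      have := Nat.find_spec hex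
      rw [h0] at this
      exact absurd this (not_lt.2 hs)
    obtain ⟨k, hKk⟩ := Nat.exists_eq_succ_of_ne_zero hKpos
    refine ⟨k, ?_, ?_⟩
    · have := Nat.find_min hex (m := k) (by omega)
      exact not_lt.1 this
    · have := Nat.find_spec hex
      rwa [hKk] at this
  constructor
  · ext μ
    simp only [mem_setOf_eq, Set.mem_range]
    constructor
    · rintro ⟨k, hk, rfl⟩
      rcases eq_or_lt_of_le hk with h | h
      · exact ⟨ts 0 - 1, by rw [hinit _ (by linarith), ← h]⟩
      · have h0 : 0 ≤ k := by omega
        refine ⟨ts k.toNat, ?_⟩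
        rw [hx k.toNat, Int.toNat_of_nonneg h0]
    · rintro ⟨s, rfl⟩
      by_cases hs : s < ts 0
      · exact ⟨-1, le_refl _, (hinit s hs).symm⟩
      · obtain ⟨k, h1, h2⟩ := hint s (not_lt.1 hs)
        exact ⟨k, by omega, (hstep k s h1 h2).symm⟩
  · ext μ
    simp only [omegaD, omegaR, mem_setOf_eq]
    constructor
    · intro hinf hbdd
      obtain ⟨b, hb⟩ := hbdd
      obtain ⟨N, hN⟩ := (htop.eventually (eventually_gt_atTop b)).exists_forall_of_atTop
      refine hinf ((Set.finite_Icc (-1 : ℤ) N).subset ?_)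
      rintro k ⟨hk1, hk2⟩
      refine ⟨hk1, ?_⟩
      by_contra hgt
      push_neg at hgt
      have h0 : 0 ≤ k := by omega
      have hkN : N ≤ k.toNat := by omega
      have : ts k.toNat ≤ b := hb (by
        show x (ts k.toNat) = μ
        rw [hx k.toNat, Int.toNat_of_nonneg h0, hk2])
      exact absurd (hN k.toNat hkN) (not_lt.2 this)
    · intro hnb
      intro hfin
      apply hnb
      exfalso
      obtain ⟨B, hB⟩ := hfin.bddAbove
      set M := B.toNat + 1 with hM
      obtain ⟨t, ht, htgt⟩ := (not_bddAbove_iff.1 hnb) (max (ts 0) (ts M))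
      have ht0 : ts 0 ≤ t := le_of_lt (lt_of_le_of_lt (le_max_left _ _) htgt)
      obtain ⟨k, h1, h2⟩ := hint t ht0
      have hxk : xd k = μ := by rw [← hstep k t h1 h2]; exact ht
      have hMk : M ≤ k := by
        by_contra hlt
        push_neg at hlt
        have h3 : ts M < t := lt_of_le_of_lt (le_max_right _ _) htgt
        have h4 : ts (k + 1) ≤ ts M := hmono.monotone (by omega)
        linarith
      have hkB : (k : ℤ) ≤ B := hB ⟨by omega, hxk⟩
      omega
end

section
/- (a) A discrete-time signal x̂ is eventually constant if and only if for every integer p ≥ 1 there exists k' ≥ -1 such that x̂ k = x̂ (k + p) for all k ≥ k'. (b) A real-time signal x is eventually constant if and only if for every real T > 0 there exists t' ∈ ℝ such that x t = x (t + T) for all t ≥ t'. -/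
open Set Filter

/-- `x : ℝ → Fin n → Bool` is a real-time signal. -/
def IsSignal {n : ℕ} (x : ℝ → Fin n → Bool) : Prop :=
  ∃ (μ₀ : Fin n → Bool) (t : ℕ → ℝ), StrictMono t ∧ Tendsto t atTop atTop ∧
    (∀ s, s < t 0 → x s = μ₀) ∧
    ∀ k : ℕ, ∀ s, t k ≤ s → s < t (k + 1) → x s = x (t k)

/-- (a) A discrete-time signal is eventually constant iff it is eventually periodic with
every period `p ≥ 1`; (b) a real-time signal is eventually constant iff it is eventually
periodic with every period `T > 0`. -/
theorem eventuallyConstant_iff_all_periods {n : ℕ} :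
    (∀ xd : ℤ → Fin n → Bool,
      (∃ (μ : Fin n → Bool) (k' : ℤ), -1 ≤ k' ∧ ∀ k : ℤ, k' ≤ k → xd k = μ) ↔
      (∀ p : ℤ, 1 ≤ p → ∃ k' : ℤ, -1 ≤ k' ∧ ∀ k : ℤ, k' ≤ k → xd k = xd (k + p))) ∧
    (∀ x : ℝ → Fin n → Bool, IsSignal x →
      ((∃ (μ : Fin n → Bool) (t' : ℝ), ∀ t : ℝ, t' ≤ t → x t = μ) ↔
       (∀ T : ℝ, 0 < T → ∃ t' : ℝ, ∀ t : ℝ, t' ≤ t → x t = x (t + T)))) := by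
  constructor
  · -- discrete case
    intro xd
    constructor
    · rintro ⟨μ, k', hneg, h⟩ p hp
      exact ⟨k', hneg, fun k hk => by rw [h k hk, h (k + p) (by linarith)]⟩
    · intro H
      obtain ⟨k', hneg, h1⟩ := H 1 le_rfl
      refine ⟨xd k', k', hneg, fun k hk => ?_⟩
      exact Int.le_induction (motive := fun m _ => xd m = xd k') rfl (fun m hm ih => by show xd (m+1) = xd k'; rw [← h1 m hm]; exact ih) k hk
  · -- real-time case
    intro x hsig
    constructor
    · rintro ⟨μ, t', h⟩ T hT
      exact ⟨t', fun s hs => by rw [h s hs, h (s + T) (by linarith)]⟩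
    · intro H
      obtain ⟨μ₀, t, hmono, htend, h0, hstep⟩ := hsig
      obtain ⟨t₁', h1⟩ := H 1 one_pos
      obtain ⟨K, hK⟩ := (htend.eventually_ge_atTop t₁').exists
      -- iterated 1-periodicity
      have h1m : ∀ (m : ℕ) (s : ℝ), t₁' ≤ s → x s = x (s + m) := by
        intro m
        induction m with
        | zero => intro s _; norm_num
        | succ m ih =>
          intro s hs
          have hm0 : (0:ℝ) ≤ (m:ℝ) := Nat.cast_nonneg m
          have h2 : x (s + m) = x (s + m + 1) := h1 (s + m) (by linarith)
          have h3 : x s = x (s + m) := ih s hs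
          push_cast
          rw [← add_assoc, h3]
          exact h2
      by_cases hc : ∀ k, K ≤ k → x (t (k + 1)) = x (t k)
      · -- x is constant from t K on
        have hckK : ∀ k, K ≤ k → x (t k) = x (t K) := by
          intro k hk
          induction k, hk using Nat.le_induction with
          | base => rfl
          | succ m hm ih => rw [hc m hm, ih]
        refine ⟨x (t K), t K, fun s hs => ?_⟩
        have hne : ∃ j, s < t j := (htend.eventually_gt_atTop s).exists
        obtain ⟨j, hsj, hmin⟩ : ∃ j, s < t j ∧ ∀ i, i < j → ¬ s < t i :=
          ⟨Nat.find hne, Nat.find_spec hne, fun i hi => Nat.find_min hne hi⟩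
        have hKj : K < j := by
          by_contra hle
          push_neg at hle
          exact absurd hsj (not_lt.2 (le_trans (hmono.monotone hle) hs))
        have hj1 : j - 1 + 1 = j := by omega
        have hts : t (j - 1) ≤ s := le_of_not_gt (hmin (j - 1) (by omega))
        have : x s = x (t (j - 1)) := hstep (j - 1) s hts (by rw [hj1]; exact hsj)
        rw [this, hckK (j - 1) (by omega)]
      · exfalso
        push_neg at hc
        obtain ⟨k, hkK, hne⟩ := hc
        have hab : t k < t (k + 1) := hmono (Nat.lt_succ_self k)
        set ε := t (k + 1) - t k with hε
        have hεpos : 0 < ε := by simp [hε]; linarith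
        obtain ⟨t₂', h2⟩ := H (ε / 2) (half_pos hεpos)
        obtain ⟨m, hm⟩ := exists_nat_ge (t₂' - t (k + 1) + ε / 2)
        have ht1a : t₁' ≤ t k := le_trans hK (hmono.monotone hkK)
        have e1 : x (t (k + 1) - ε / 2) = x (t k) :=
          hstep k (t (k + 1) - ε / 2) (by simp [hε]; linarith) (by linarith)
        have e2 : x (t (k + 1) - ε / 2) = x (t (k + 1) - ε / 2 + m) :=
          h1m m _ (by simp [hε]; linarith)
        have e3 : x (t (k + 1)) = x (t (k + 1) + m) := h1m m _ (by linarith)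
        have e4 : x (t (k + 1) - ε / 2 + m) = x (t (k + 1) - ε / 2 + m + ε / 2) :=
          h2 _ (by linarith)
        have e5 : t (k + 1) - ε / 2 + m + ε / 2 = t (k + 1) + m := by ring
        apply hne
        rw [e3, ← e5, ← e4, ← e2, e1]
end

section
/- Let x be a real-time signal which is a step-h signal based at t₀ (for some t₀ ∈ ℝ and h > 0), let μ ∈ ω(x), and suppose there exist t' ∈ ℝ and T > 0 with T not an integer multiple of h (i.e. T ∈ (0,h) ∪ (h,2h) ∪ (2h,3h) ∪ …) such that μ satisfies the eventual periodicity condition for x with period T and limit t'. Then x t = μ for all t ≥ t', and consequently μ satisfies the eventual periodicity condition for x with limit t' and every period T > 0. -/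
open Set Filter

/-- `μ` satisfies the eventual periodicity condition for `x` with period `T` and limit `t'`. -/
def EvPerR {n : ℕ} (x : ℝ → Fin n → Bool) (μ : Fin n → Bool) (T t' : ℝ) : Prop :=
  ∀ t : ℝ, t' ≤ t → x t = μ → ∀ z : ℤ, t' ≤ t + z * T → x (t + z * T) = μ

/-- `x` is a step-`h` signal based at `t₀`: it equals its initial value before `t₀` and is
constant on each interval `[t₀ + k·h, t₀ + (k+1)·h)`. -/
def StepSignal {n : ℕ} (x : ℝ → Fin n → Bool) (t₀ h : ℝ) : Prop :=
  ∃ μ₀ : Fin n → Bool, (∀ s, s < t₀ → x s = μ₀) ∧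
    ∀ k : ℕ, ∀ s, t₀ + k * h ≤ s → s < t₀ + (k + 1) * h → x s = x (t₀ + k * h)

/-- If an omega limit point of a step-`h` signal is eventually periodic with a period `T`
which is not an integer multiple of `h`, then the signal is eventually equal to that point,
and the point is then eventually periodic with every period. -/
theorem eventually_constant_of_incommensurable_period {n : ℕ}
    (x : ℝ → Fin n → Bool) (hx : IsSignal x) (t₀ h : ℝ) (hh : 0 < h)
    (hstep : StepSignal x t₀ h) (μ : Fin n → Bool) (hμ : μ ∈ omegaR x)
    (t' T : ℝ) (hT : 0 < T) (hTnot : ∀ q : ℕ, T ≠ q * h)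
    (hper : EvPerR x μ T t') :
    (∀ t : ℝ, t' ≤ t → x t = μ) ∧ ∀ T'' : ℝ, 0 < T'' → EvPerR x μ T'' t' := by
  obtain ⟨μ₀, hpre, hcell⟩ := hstep
  set q : ℕ := ⌊T / h⌋₊ with hqdef
  have hq1 : (q : ℝ) * h ≤ T := by
    have h1 : (q : ℝ) ≤ T / h := Nat.floor_le (by positivity)
    calc (q : ℝ) * h ≤ (T / h) * h := mul_le_mul_of_nonneg_right h1 hh.le
      _ = T := by field_simp
  have hq1' : (q : ℝ) * h < T := lt_of_le_of_ne hq1 (fun e => hTnot q e.symm)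
  have hq2 : T < ((q : ℝ) + 1) * h := by
    have h1 : T / h < (q : ℝ) + 1 := Nat.lt_floor_add_one (T / h)
    calc T = (T / h) * h := by field_simp
      _ < ((q : ℝ) + 1) * h := mul_lt_mul_of_pos_right h1 hh
  have cellEq : ∀ (j : ℕ) (s1 s2 : ℝ), t₀ + j * h ≤ s1 → s1 < t₀ + (j + 1) * h →
      t₀ + j * h ≤ s2 → s2 < t₀ + (j + 1) * h → x s1 = x s2 := by
    intro j s1 s2 h1 h2 h3 h4
    rw [hcell j s1 h1 h2, hcell j s2 h3 h4]
  -- the key step: shifting a grid-aligned μ-interval by T enlarges it by one cell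
  have step : ∀ (k m : ℕ), 1 ≤ m → t' ≤ t₀ + (k : ℝ) * h →
      (∀ s, t₀ + (k : ℝ) * h ≤ s → s < t₀ + ((k : ℝ) + (m : ℝ)) * h → x s = μ) →
      ∀ s, t₀ + ((k : ℝ) + (q : ℝ)) * h ≤ s →
        s < t₀ + ((k : ℝ) + (q : ℝ) + (m : ℝ) + 1) * h → x s = μ := by
    intro k m hm hk hI s hs1 hs2
    have hm1 : (1 : ℝ) ≤ (m : ℝ) := by exact_mod_cast hm
    have hmh : h ≤ (m : ℝ) * h := by
      calc h = 1 * h := (one_mul h).symm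
        _ ≤ (m : ℝ) * h := mul_le_mul_of_nonneg_right hm1 hh.le
    by_cases c1 : t₀ + (k : ℝ) * h ≤ s - T
    · by_cases c2 : s - T < t₀ + ((k : ℝ) + (m : ℝ)) * h
      · have h1 : x (s - T) = μ := hI _ c1 c2
        have h2 := hper (s - T) (le_trans hk c1) h1 1 (by push_cast; linarith [le_trans hk c1])
        rw [show s - T + ((1 : ℤ) : ℝ) * T = s from by push_cast; ring] at h2
        exact h2
      · push_neg at c2
        set δ : ℝ := (T - (q : ℝ) * h) / 2 with hδdef
        have hδpos : 0 < δ := by simp only [hδdef]; linarith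
        have hδh : δ < h := by simp only [hδdef]; linarith
        set b : ℝ := t₀ + ((k : ℝ) + (m : ℝ)) * h - δ with hbdef
        have hbmem1 : t₀ + (k : ℝ) * h ≤ b := by simp only [hbdef]; linarith
        have hbmem2 : b < t₀ + ((k : ℝ) + (m : ℝ)) * h := by simp only [hbdef]; linarith
        have hb : x b = μ := hI b hbmem1 hbmem2
        have hbT := hper b (le_trans hk hbmem1) hb 1 (by
          push_cast; linarith [le_trans hk hbmem1])
        rw [show b + ((1 : ℤ) : ℝ) * T = b + T from by push_cast; ring] at hbT
        have hmain : x s = x (b + T) := by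
          apply cellEq (k + q + m) s (b + T)
          · push_cast; linarith
          · push_cast; linarith
          · simp only [hbdef]; push_cast; linarith
          · simp only [hbdef]; push_cast; linarith
        rw [hmain, hbT]
    · push_neg at c1
      have ha : x (t₀ + (k : ℝ) * h) = μ := hI _ le_rfl (by linarith)
      have haT := hper (t₀ + (k : ℝ) * h) hk ha 1 (by push_cast; linarith)
      rw [show t₀ + (k : ℝ) * h + ((1 : ℤ) : ℝ) * T = t₀ + (k : ℝ) * h + T from by
        push_cast; ring] at haT
      have hmain : x s = x (t₀ + (k : ℝ) * h + T) := by
        apply cellEq (k + q) s (t₀ + (k : ℝ) * h + T)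
        · push_cast; linarith
        · push_cast; linarith
        · push_cast; linarith
        · push_cast; linarith
      rw [hmain, haT]
  -- base: a full μ-cell beyond t'
  have hbase : ∃ tb, x tb = μ ∧ max t' t₀ + h < tb := by
    by_contra hcon
    push_neg at hcon
    exact hμ ⟨max t' t₀ + h, fun y hy => hcon y hy⟩
  obtain ⟨tb, htbμ, htb⟩ := hbase
  have htbt₀ : t₀ + h < tb := lt_of_le_of_lt (by simp [le_max_right]) htb
  have htbt' : t' + h < tb := lt_of_le_of_lt (by simp [le_max_left]) htb
  set k₀ : ℕ := ⌊(tb - t₀) / h⌋₊ with hk₀def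
  have hk01 : (k₀ : ℝ) * h ≤ tb - t₀ :=
    (le_div_iff₀ hh).1 (Nat.floor_le (div_nonneg (by linarith) hh.le))
  have hk02 : tb - t₀ < ((k₀ : ℝ) + 1) * h := by
    have h1 : (tb - t₀) / h < (k₀ : ℝ) + 1 := Nat.lt_floor_add_one _
    calc tb - t₀ = ((tb - t₀) / h) * h := by field_simp
      _ < ((k₀ : ℝ) + 1) * h := mul_lt_mul_of_pos_right h1 hh
  have hcellμ : ∀ s, t₀ + (k₀ : ℝ) * h ≤ s → s < t₀ + ((k₀ : ℝ) + 1) * h → x s = μ := by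
    intro s a b
    exact (cellEq k₀ s tb a b (by linarith) (by linarith)).trans htbμ
  have hk₀t' : t' ≤ t₀ + (k₀ : ℝ) * h := by linarith
  -- the chain of expanding μ-intervals
  have chain : ∀ j : ℕ, t' ≤ t₀ + ((k₀ : ℝ) + (j : ℝ) * (q : ℝ)) * h ∧
      ∀ s, t₀ + ((k₀ : ℝ) + (j : ℝ) * (q : ℝ)) * h ≤ s →
        s < t₀ + ((k₀ : ℝ) + (j : ℝ) * (q : ℝ) + (j : ℝ) + 1) * h → x s = μ := by
    intro j
    induction j with
    | zero =>
      constructor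
      · push_cast; simpa using hk₀t'
      · intro s h1 h2
        apply hcellμ s (by push_cast at h1 ⊢; linarith) (by push_cast at h2 ⊢; linarith)
    | succ j ih =>
      obtain ⟨ih1, ih2⟩ := ih
      have hq0 : (0 : ℝ) ≤ (q : ℝ) * h := by positivity
      have harg : ∀ s, t₀ + (((k₀ + j * q : ℕ)) : ℝ) * h ≤ s →
          s < t₀ + ((((k₀ + j * q : ℕ)) : ℝ) + (((j + 1 : ℕ)) : ℝ)) * h → x s = μ := by
        intro s h1 h2
        apply ih2 s
        · push_cast at h1 ⊢; linarith
        · push_cast at h2 ⊢; linarith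
      have hs := step (k₀ + j * q) (j + 1) (Nat.le_add_left 1 j) (by push_cast; linarith) harg
      constructor
      · push_cast; linarith
      · intro s h1 h2
        apply hs s
        · push_cast at h1 ⊢; linarith
        · push_cast at h2 ⊢; linarith
  -- coverage: from stage q on, the intervals overlap and cover a half-line
  have cover : ∀ (j : ℕ) (s : ℝ), t₀ + ((k₀ : ℝ) + (q : ℝ) * (q : ℝ)) * h ≤ s →
      s < t₀ + ((k₀ : ℝ) + ((q : ℝ) + (j : ℝ)) * (q : ℝ) + (q : ℝ) + (j : ℝ) + 1) * h →
      x s = μ := by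
    intro j
    induction j with
    | zero =>
      intro s h1 h2
      exact (chain q).2 s h1 (by push_cast at h2 ⊢; linarith)
    | succ j ih =>
      intro s h1 h2
      rcases lt_or_ge s (t₀ + ((k₀ : ℝ) + ((q : ℝ) + (j : ℝ)) * (q : ℝ) + (q : ℝ) + (j : ℝ) + 1) * h) with hc | hc
      · exact ih s h1 hc
      · apply (chain (q + j + 1)).2 s
        · have hj1 : (0 : ℝ) ≤ (j : ℝ) * h := by positivity
          push_cast
          linarith [hh.le]
        · push_cast at h2 ⊢; linarith
  -- eventually constant
  have hA : ∀ s, t₀ + ((k₀ : ℝ) + (q : ℝ) * (q : ℝ)) * h ≤ s → x s = μ := by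
    intro s hs
    set j : ℕ := ⌈(s - t₀) / h⌉₊ with hjdef
    have hj : s - t₀ ≤ (j : ℝ) * h := (div_le_iff₀ hh).1 (Nat.le_ceil _)
    apply cover j s hs
    have hnn : (0 : ℝ) ≤ ((k₀ : ℝ) + ((q : ℝ) + (j : ℝ)) * (q : ℝ) + (q : ℝ)) * h := by positivity
    have hexp : ((k₀ : ℝ) + ((q : ℝ) + (j : ℝ)) * (q : ℝ) + (q : ℝ) + (j : ℝ) + 1) * h
        = ((k₀ : ℝ) + ((q : ℝ) + (j : ℝ)) * (q : ℝ) + (q : ℝ)) * h + (j : ℝ) * h + h := by ring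
    linarith
  have part1 : ∀ t : ℝ, t' ≤ t → x t = μ := by
    intro t ht
    set A : ℝ := t₀ + ((k₀ : ℝ) + (q : ℝ) * (q : ℝ)) * h with hAdef
    set z : ℕ := ⌈(A - t) / T⌉₊ with hzdef
    have hz : A ≤ t + (z : ℝ) * T := by
      have h1 : A - t ≤ (z : ℝ) * T := (div_le_iff₀ hT).1 (Nat.le_ceil _)
      linarith
    have hzT : (0 : ℝ) ≤ (z : ℝ) * T := by positivity
    have h1 : x (t + (z : ℝ) * T) = μ := hA _ hz
    have h2 := hper (t + (z : ℝ) * T) (by linarith) h1 (-(z : ℤ)) (by push_cast; linarith)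
    rw [show t + (z : ℝ) * T + ((-(z : ℤ) : ℤ) : ℝ) * T = t from by push_cast; ring] at h2
    exact h2
  exact ⟨part1, fun T'' hT'' t ht hxt z hz => part1 _ hz⟩
end

section
/- (a) Let x̂ be a discrete-time signal and μ ∈ ω̂(x̂) eventually periodic with period p ≥ 1 and limit of periodicity k' ≥ -1. Then for every k ≥ k' there exists i with k ≤ i ≤ k + p − 1 and x̂ i = μ. (b) Let x be a real-time signal and μ ∈ ω(x) eventually periodic with period T > 0 and limit of periodicity t' ∈ ℝ. Then for every t ≥ t' there exists ξ ∈ [t, t + T) with x ξ = μ. -/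
open Set Filter

/-- Eventual periodicity condition, discrete time. -/
def EvPerD {n : ℕ} (xd : ℤ → Fin n → Bool) (μ : Fin n → Bool) (p k' : ℤ) : Prop :=
  ∀ k : ℤ, k' ≤ k → xd k = μ → ∀ z : ℤ, k' ≤ k + z * p → xd (k + z * p) = μ

/-- An eventually periodic point is accessed, beyond the limit of periodicity, at least
once in every time interval of the length of a period. -/
theorem eventually_periodic_point_accessible {n : ℕ} :
    (∀ (xd : ℤ → Fin n → Bool) (μ : Fin n → Bool), μ ∈ omegaD xd →
      ∀ p k' : ℤ, 1 ≤ p → -1 ≤ k' → EvPerD xd μ p k' →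
        ∀ k : ℤ, k' ≤ k → ∃ i : ℤ, k ≤ i ∧ i ≤ k + p - 1 ∧ xd i = μ) ∧
    (∀ x : ℝ → Fin n → Bool, IsSignal x → ∀ μ ∈ omegaR x,
      ∀ T t' : ℝ, 0 < T → EvPerR x μ T t' →
        ∀ t : ℝ, t' ≤ t → ∃ ξ : ℝ, t ≤ ξ ∧ ξ < t + T ∧ x ξ = μ) := by
  constructor
  · intro xd μ hμ p k' hp hk' hEv k hk
    obtain ⟨j, hjmem, hkj⟩ : ∃ j : ℤ, (-1 ≤ j ∧ xd j = μ) ∧ k ≤ j := by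
      by_contra h
      push_neg at h
      exact hμ ((Set.finite_Icc (-1) k).subset
        (fun j hj => ⟨hj.1, (h j ⟨hj.1, hj.2⟩).le⟩))
    have hp0 : p ≠ 0 := by omega
    have hmod : 0 ≤ (j - k) % p := Int.emod_nonneg (j - k) hp0
    have hmodlt : (j - k) % p < p := Int.emod_lt_of_pos (j - k) (by omega)
    have hdm := Int.mul_ediv_add_emod (j - k) p
    have hi : j + (-((j - k) / p)) * p = k + (j - k) % p := by linarith
    refine ⟨j + (-((j - k) / p)) * p, by linarith, by linarith, ?_⟩
    exact hEv j (hk.trans hkj) hjmem.2 (-((j - k) / p)) (by linarith)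
  · intro x _ μ hμ T t' hT hEv t ht
    simp only [omegaR, Set.mem_setOf_eq, not_bddAbove_iff] at hμ
    obtain ⟨s, hsμ, hts⟩ := hμ t
    set z : ℤ := ⌊(s - t) / T⌋ with hz
    have h1 : (z : ℝ) * T ≤ s - t := by
      have := Int.floor_le ((s - t) / T)
      calc (z : ℝ) * T ≤ ((s - t) / T) * T := by nlinarith
        _ = s - t := div_mul_cancel₀ _ hT.ne'
    have h2 : s - t < ((z : ℝ) + 1) * T := by
      have := Int.lt_floor_add_one ((s - t) / T)
      have h3 : (s - t) / T * T = s - t := div_mul_cancel₀ _ hT.ne'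
      nlinarith
    refine ⟨s + (-z : ℤ) * T, by push_cast; linarith, by push_cast; linarith, ?_⟩
    exact hEv s (ht.trans hts.le) hsμ (-z) (by push_cast; linarith)
end

section
/- Let x be a real-time signal, μ ∈ ω(x), T > 0, T' > 0 and t', t'' ∈ ℝ. If μ satisfies the eventual periodicity condition for x with period T and limit t', and μ also satisfies the eventual periodicity condition for x with period T' and limit t'', then μ satisfies the eventual periodicity condition for x with period T' and limit t'. (The set of limits of periodicity of μ does not depend on the period.) -/
open Set Filter

/-- The set of limits of periodicity of an omega limit point does not depend on the
period: a limit of periodicity for one period is a limit of periodicity for any other. -/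
theorem limit_of_periodicity_independent_of_period {n : ℕ}
    (x : ℝ → Fin n → Bool) (hx : IsSignal x) (μ : Fin n → Bool) (hμ : μ ∈ omegaR x)
    (T T' t' t'' : ℝ) (hT : 0 < T) (hT' : 0 < T')
    (h1 : EvPerR x μ T t') (h2 : EvPerR x μ T' t'') :
    EvPerR x μ T' t' := by
  intro t ht hxt z hz
  obtain ⟨k, hk⟩ := exists_nat_ge (max (t'' - t) (t'' - (t + z * T')) / T)
  rw [div_le_iff₀ hT] at hk
  have ha : t'' - t ≤ k * T := (le_max_left _ _).trans hk
  have hb : t'' - (t + z * T') ≤ k * T := (le_max_right _ _).trans hk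
  have hk0 : (0:ℝ) ≤ (k:ℝ) * T := by positivity
  have hs : x (t + (k:ℤ) * T) = μ := h1 t ht hxt k (by push_cast; linarith)
  have hs2 : x (t + (k:ℤ) * T + z * T') = μ :=
    h2 (t + (k:ℤ) * T) (by push_cast; linarith) hs z (by push_cast; linarith)
  have hfin := h1 (t + (k:ℤ) * T + z * T') (by push_cast; linarith) hs2 (-(k:ℤ))
    (by push_cast; linarith)
  have heq : t + ((k:ℤ):ℝ) * T + (z:ℝ) * T' + ((-(k:ℤ):ℤ):ℝ) * T = t + (z:ℝ) * T' := by
    push_cast; ring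
  rwa [heq] at hfin
end

section
/- Let x be a real-time signal which is not a constant function, and let μ ∈ ω(x) with L_μ^x ≠ ∅. Then there exists t' ∈ ℝ such that L_μ^x = [t', ∞). -/
open Set Filter

/-- The set of limits of periodicity of `μ` for `x`. -/
def Lset {n : ℕ} (x : ℝ → Fin n → Bool) (μ : Fin n → Bool) : Set ℝ :=
  {t' | ∃ T : ℝ, 0 < T ∧ EvPerR x μ T t'}

/-- A signal is right-locally-constant. -/
lemma signal_rconst {n : ℕ} (x : ℝ → Fin n → Bool) (hx : IsSignal x) (t : ℝ) :
    ∃ ε > 0, ∀ s, t ≤ s → s < t + ε → x s = x t := by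
  classical
  obtain ⟨μ₀, ts, hmono, htend, h0, hstep⟩ := hx
  by_cases h : t < ts 0
  · exact ⟨ts 0 - t, by linarith, fun s hs1 hs2 => by
      rw [h0 s (by linarith), h0 t h]⟩
  · push_neg at h
    obtain ⟨N, hN⟩ := (htend.eventually_gt_atTop t).exists
    set k := Nat.findGreatest (fun k => ts k ≤ t) N with hk
    have hPk : ts k ≤ t := Nat.findGreatest_spec (P := fun k => ts k ≤ t) (Nat.zero_le N) h
    have hkN : k < N := by
      rcases lt_or_ge k N with h' | h'
      · exact h'
      · exfalso
        have h1 : k ≤ N := Nat.findGreatest_le N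
        have h2 : k = N := le_antisymm h1 h'
        rw [h2] at hPk; linarith
    have hnot : ¬ ts (k + 1) ≤ t :=
      Nat.findGreatest_is_greatest (Nat.lt_succ_self k) hkN
    push_neg at hnot
    refine ⟨ts (k + 1) - t, by linarith, fun s hs1 hs2 => ?_⟩
    rw [hstep k s (le_trans hPk hs1) (by linarith), hstep k t hPk hnot]

lemma iter_per {n : ℕ} (x : ℝ → Fin n → Bool) {μ : Fin n → Bool} {T t' : ℝ}
    (hT : 0 < T) (per : ∀ t, t' ≤ t → (x t = μ ↔ x (t + T) = μ)) :
    ∀ m : ℕ, ∀ s, t' ≤ s → (x s = μ ↔ x (s + m * T) = μ) := by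
  intro m
  induction m with
  | zero => intro s _; simp
  | succ k ih =>
    intro s hs
    have h1 : s + ((k : ℝ) + 1) * T = (s + k * T) + T := by ring
    have h2 : t' ≤ s + k * T := by nlinarith [hT.le, Nat.cast_nonneg (α := ℝ) k]
    push_cast
    rw [h1, ih s hs]
    exact per (s + k * T) h2

lemma evper_iff {n : ℕ} (x : ℝ → Fin n → Bool) {μ : Fin n → Bool} {T t' : ℝ}
    (hT : 0 < T) :
    EvPerR x μ T t' ↔ ∀ t, t' ≤ t → (x t = μ ↔ x (t + T) = μ) := by
  constructor
  · intro h t ht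
    constructor
    · intro hxt
      have := h t ht hxt 1 (by push_cast; linarith)
      simpa using this
    · intro hxt
      have := h (t + T) (by linarith) hxt (-1) (by push_cast; linarith)
      simpa using this
  · intro per t ht hxt z hz
    rcases le_or_gt 0 z with hz0 | hz0
    · obtain ⟨m, rfl⟩ : ∃ m : ℕ, z = (m : ℤ) := ⟨z.toNat, (Int.toNat_of_nonneg hz0).symm⟩
      have := (iter_per x hT per m t ht).mp hxt
      push_cast at this ⊢
      exact this
    · obtain ⟨m, hm⟩ : ∃ m : ℕ, -z = (m : ℤ) :=
        ⟨(-z).toNat, (Int.toNat_of_nonneg (by omega)).symm⟩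
      have hts : (t + z * T) + m * T = t := by
        have : ((m : ℤ) : ℝ) = -(z : ℝ) := by exact_mod_cast congrArg (fun a : ℤ => (a : ℝ)) hm.symm
        push_cast at this
        rw [this]; ring
      have := iter_per x hT per m (t + z * T) hz
      rw [hts] at this
      exact this.mpr hxt

/-- For a non-constant signal, the nonempty set of limits of periodicity of an omega
limit point is a closed half-line `[t', ∞)`. -/
theorem Lset_eq_Ici {n : ℕ} (x : ℝ → Fin n → Bool) (hx : IsSignal x)
    (hnc : ¬ ∀ t s : ℝ, x t = x s) (μ : Fin n → Bool) (hμ : μ ∈ omegaR x)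
    (hL : (Lset x μ).Nonempty) :
    ∃ t' : ℝ, Lset x μ = Set.Ici t' := by
  classical
  obtain ⟨t0, T0, hT0, hEv0⟩ := hL
  have per0 : ∀ t, t0 ≤ t → (x t = μ ↔ x (t + T0) = μ) := (evper_iff x hT0).mp hEv0
  set B := {t : ℝ | ¬ (x t = μ ↔ x (t + T0) = μ)} with hBdef
  -- B is nonempty
  have hBne : B.Nonempty := by
    by_contra hBe
    rw [Set.not_nonempty_iff_eq_empty] at hBe
    have hAll : ∀ t : ℝ, (x t = μ ↔ x (t + T0) = μ) := by
      intro t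
      by_contra h
      have : t ∈ B := h
      rw [hBe] at this
      exact this
    obtain ⟨μ₀, ts, hmono, htend, h0, hstep⟩ := hx
    have key : ∀ t : ℝ, (x t = μ ↔ μ₀ = μ) := by
      intro t
      obtain ⟨m, hm⟩ := exists_nat_gt ((t - ts 0) / T0)
      have hm' : t - m * T0 < ts 0 := by
        have := (div_lt_iff₀ hT0).mp hm
        linarith
      have hiter := iter_per x hT0 (fun s _ => hAll s) m (t - m * T0) le_rfl
      have heq : t - m * T0 + m * T0 = t := by ring
      rw [heq] at hiter
      rw [← hiter, h0 _ hm']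
    by_cases hc : μ₀ = μ
    · exact hnc (fun t s => by rw [(key t).mpr hc, (key s).mpr hc])
    · apply hμ
      have : {t : ℝ | x t = μ} = ∅ := by
        ext t; simp only [Set.mem_setOf_eq, Set.mem_empty_iff_false, iff_false]
        intro h; exact hc ((key t).mp h)
      rw [this]
      exact bddAbove_empty
  -- B is bounded above by t0
  have hBbdd : BddAbove B := by
    refine ⟨t0, fun b hb => ?_⟩
    by_contra h
    push_neg at h
    exact hb (per0 b h.le)
  refine ⟨sSup B, ?_⟩
  ext t'
  simp only [Set.mem_Ici]
  constructor
  · rintro ⟨T, hT, hEv⟩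
    have per : ∀ t, t' ≤ t → (x t = μ ↔ x (t + T) = μ) := (evper_iff x hT).mp hEv
    apply csSup_le hBne
    intro b hb
    by_contra hbt
    push_neg at hbt
    apply hb
    -- show x b = μ ↔ x (b + T0) = μ using downward propagation
    obtain ⟨m, hm⟩ := exists_nat_gt ((t0 - b) / T)
    have hm' : t0 ≤ b + m * T := by
      have := (div_lt_iff₀ hT).mp hm
      linarith
    have h1 := iter_per x hT per m b hbt.le
    have h2 := per0 (b + m * T) hm'
    have h3 := iter_per x hT per m (b + T0) (by linarith)
    have heq : b + T0 + m * T = b + m * T + T0 := by ring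
    rw [heq] at h3
    rw [h1, h2, ← h3]
  · intro h
    refine ⟨T0, hT0, (evper_iff x hT0).mpr ?_⟩
    intro t ht
    by_contra hB
    have htB : t ∈ B := hB
    have hle : t ≤ sSup B := le_csSup hBbdd htB
    have hteq : t = sSup B := le_antisymm hle (le_trans h ht)
    obtain ⟨ε₁, hε₁, hc₁⟩ := signal_rconst x hx t
    obtain ⟨ε₂, hε₂, hc₂⟩ := signal_rconst x hx (t + T0)
    set ε := min ε₁ ε₂ with hε
    have hεpos : 0 < ε := lt_min hε₁ hε₂
    have hmem : t + ε / 2 ∈ B := by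
      have e1 : x (t + ε / 2) = x t := hc₁ _ (by linarith) (by
        have : ε ≤ ε₁ := min_le_left _ _; linarith)
      have e2 : x (t + ε / 2 + T0) = x (t + T0) := by
        have : t + ε / 2 + T0 = (t + T0) + ε / 2 := by ring
        rw [this]
        exact hc₂ _ (by linarith) (by
          have : ε ≤ ε₂ := min_le_right _ _; linarith)
      simp only [hBdef, Set.mem_setOf_eq, e1, e2]
      exact hB
    have := le_csSup hBbdd hmem
    rw [← hteq] at this
    linarith
end

section
/- Let x be a real-time signal, μ ∈ ω(x), T > 0, T' > 0 and t' ∈ ℝ, and suppose μ satisfies the eventual periodicity condition for x with limit t' both with period T and with period T'. Then μ satisfies the eventual periodicity condition for x with limit t' and period T + T'; and if T > T', then μ satisfies the eventual periodicity condition for x with limit t' and period T − T'. -/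
open Set Filter

lemma aux_per {n : ℕ} (x : ℝ → Fin n → Bool) (μ : Fin n → Bool) (T T' t' : ℝ)
    (hT : 0 < T) (h1 : EvPerR x μ T t')
    (h2 : ∀ t : ℝ, t' ≤ t → x t = μ → ∀ z : ℤ, t' ≤ t + z * T' → x (t + z * T') = μ) :
    EvPerR x μ (T + T') t' := by
  intro t ht hxt z hz
  rw [mul_add] at hz
  obtain ⟨N, hN⟩ := exists_nat_ge ((t' - t - z * T') / T)
  have hNT : t' - t - z * T' ≤ N * T := (div_le_iff₀ hT).mp hN
  have hN' : t' ≤ t + N * T + z * T' := by linarith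
  have h0 : t' ≤ t + N * T := by
    have : (0:ℝ) ≤ (N:ℝ) * T := by positivity
    linarith
  have hA : x (t + (N:ℝ) * T) = μ := by
    have := h1 t ht hxt N (by push_cast; linarith)
    push_cast at this
    exact this
  have hB : x (t + (N:ℝ) * T + z * T') = μ := h2 (t + N * T) h0 hA z hN'
  have hC := h1 (t + (N:ℝ) * T + z * T') hN' hB (z - N) (by push_cast; linarith)
  push_cast at hC
  rw [show (t + (N:ℝ) * T + z * T') + ((z:ℝ) - N) * T = t + (z * T + z * T') from by ring,
    ← mul_add] at hC
  exact hC

/-- Sums and (positive) differences of periods of an eventually periodic point, with a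
common limit of periodicity, are again periods with that limit of periodicity. -/
theorem sum_diff_of_periods {n : ℕ} (x : ℝ → Fin n → Bool) (hx : IsSignal x)
    (μ : Fin n → Bool) (hμ : μ ∈ omegaR x) (T T' t' : ℝ) (hT : 0 < T) (hT' : 0 < T')
    (h1 : EvPerR x μ T t') (h2 : EvPerR x μ T' t') :
    EvPerR x μ (T + T') t' ∧ (T' < T → EvPerR x μ (T - T') t') := by
  constructor
  · exact aux_per x μ T T' t' hT h1 h2
  · intro _
    have h2' : ∀ t : ℝ, t' ≤ t → x t = μ → ∀ z : ℤ, t' ≤ t + z * (-T') →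
        x (t + z * (-T')) = μ := by
      intro t ht hxt z hzc
      have he : t + (z:ℝ) * (-T') = t + ((-z : ℤ):ℝ) * T' := by push_cast; ring
      rw [he] at hzc ⊢
      exact h2 t ht hxt (-z) hzc
    have := aux_per x μ T (-T') t' hT h1 h2'
    rwa [show T + -T' = T - T' from by ring] at this
end

section
/- (a) Let x̂ be a discrete-time signal and μ ∈ ω̂(x̂) an eventually periodic point of x̂ (i.e. P̂_μ^x̂ ≠ ∅). Then there exists an integer p̃ ≥ 1 such that P̂_μ^x̂ = {p̃, 2p̃, 3p̃, …}, the set of positive integer multiples of p̃. (b) Let x be a real-time signal that is not eventually constant and μ ∈ ω(x) an eventually periodic point of x (i.e. P_μ^x ≠ ∅). Then there exists T̃ > 0 such that P_μ^x = {T̃, 2T̃, 3T̃, …}, the set of positive integer multiples of T̃. -/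
open Set Filter

/-- The set of periods of the point `μ` of `xd`. -/
def PsetD {n : ℕ} (xd : ℤ → Fin n → Bool) (μ : Fin n → Bool) : Set ℤ :=
  {p | 1 ≤ p ∧ ∃ k' : ℤ, -1 ≤ k' ∧ EvPerD xd μ p k'}

/-- The set of periods of the point `μ` of `x`. -/
def PsetR {n : ℕ} (x : ℝ → Fin n → Bool) (μ : Fin n → Bool) : Set ℝ :=
  {T | 0 < T ∧ ∃ t' : ℝ, EvPerR x μ T t'}

/-- Generic eventual periodicity condition. -/
def EvPerG {R : Type*} [CommRing R] [LinearOrder R] [IsStrictOrderedRing R] (f : R → Prop) (T t' : R) : Prop :=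
  ∀ t : R, t' ≤ t → f t → ∀ z : ℤ, t' ≤ t + z * T → f (t + z * T)

lemma evperg_step2 {R : Type*} [CommRing R] [LinearOrder R] [IsStrictOrderedRing R] {f : R → Prop} {T₁ T₂ t₁ t₂ : R}
    (h₁ : EvPerG f T₁ t₁) (h₂ : EvPerG f T₂ t₂) :
    ∀ t : R, max t₁ t₂ ≤ t → f t → ∀ A B : ℤ,
      max t₁ t₂ ≤ t + A * T₁ + B * T₂ → f (t + A * T₁ + B * T₂) := by
  intro t ht hf A B htar
  have ht1 : t₁ ≤ t := le_trans (le_max_left _ _) ht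
  have ht2 : t₂ ≤ t := le_trans (le_max_right _ _) ht
  have htar1 : t₁ ≤ t + A * T₁ + B * T₂ := le_trans (le_max_left _ _) htar
  have htar2 : t₂ ≤ t + A * T₁ + B * T₂ := le_trans (le_max_right _ _) htar
  rcases le_or_gt 0 ((B : R) * T₂) with hB | hB
  · have hu : f (t + B * T₂) := h₂ t ht2 hf B (by linarith)
    have h' := h₁ (t + B * T₂) (by linarith) hu A
      (show t₁ ≤ t + B * T₂ + A * T₁ by linarith)
    have e : t + (A : R) * T₁ + B * T₂ = t + B * T₂ + A * T₁ := by ring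
    rw [e]; exact h'
  · have hu : f (t + A * T₁) := h₁ t ht1 hf A (by linarith)
    exact h₂ (t + A * T₁) (by linarith) hu B (by linarith)

lemma evperg_combo {R : Type*} [CommRing R] [LinearOrder R] [IsStrictOrderedRing R] {f : R → Prop} {T₁ T₂ t₁ t₂ : R}
    (h₁ : EvPerG f T₁ t₁) (h₂ : EvPerG f T₂ t₂) (A B : ℤ) :
    EvPerG f ((A : R) * T₁ + (B : R) * T₂) (max t₁ t₂) := by
  intro t ht hf z hz
  have e : t + (z : R) * ((A : R) * T₁ + (B : R) * T₂)
      = t + ((z * A : ℤ) : R) * T₁ + ((z * B : ℤ) : R) * T₂ := by push_cast; ring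
  rw [e] at hz ⊢
  exact evperg_step2 h₁ h₂ t ht hf (z * A) (z * B) hz

lemma evperg_mul {R : Type*} [CommRing R] [LinearOrder R] [IsStrictOrderedRing R] {f : R → Prop} {T t' : R}
    (h : EvPerG f T t') (m : ℤ) : EvPerG f ((m : R) * T) t' := by
  intro t ht hf z hz
  have e : t + (z : R) * ((m : R) * T) = t + ((z * m : ℤ) : R) * T := by push_cast; ring
  rw [e] at hz ⊢
  exact h t ht hf (z * m) hz

lemma evperd_iff_evperg {n : ℕ} (xd : ℤ → Fin n → Bool) (μ : Fin n → Bool) (p k' : ℤ) :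
    EvPerD xd μ p k' ↔ EvPerG (fun k => xd k = μ) p k' := by
  constructor <;> intro h t ht hf z hz
  · simpa using h t ht hf z (by simpa using hz)
  · simpa using h t ht hf z (by simpa using hz)

lemma evperr_iff_evperg {n : ℕ} (x : ℝ → Fin n → Bool) (μ : Fin n → Bool) (T t' : ℝ) :
    EvPerR x μ T t' ↔ EvPerG (fun t => x t = μ) T t' := Iff.rfl

lemma psetR_comb {n : ℕ} {x : ℝ → Fin n → Bool} {μ : Fin n → Bool} {T₁ T₂ : ℝ}
    (h₁ : T₁ ∈ PsetR x μ) (h₂ : T₂ ∈ PsetR x μ) (A B : ℤ)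
    (hpos : 0 < (A : ℝ) * T₁ + (B : ℝ) * T₂) : ((A : ℝ) * T₁ + (B : ℝ) * T₂) ∈ PsetR x μ := by
  obtain ⟨_, t₁, hE1⟩ := h₁
  obtain ⟨_, t₂, hE2⟩ := h₂
  exact ⟨hpos, max t₁ t₂, evperg_combo hE1 hE2 A B⟩

lemma psetD_comb {n : ℕ} {xd : ℤ → Fin n → Bool} {μ : Fin n → Bool} {p₁ p₂ : ℤ}
    (h₁ : p₁ ∈ PsetD xd μ) (h₂ : p₂ ∈ PsetD xd μ) (A B : ℤ)
    (hpos : 1 ≤ A * p₁ + B * p₂) : (A * p₁ + B * p₂) ∈ PsetD xd μ := by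
  obtain ⟨_, k₁, hk₁, hE1⟩ := h₁
  obtain ⟨_, k₂, hk₂, hE2⟩ := h₂
  rw [evperd_iff_evperg] at hE1 hE2
  refine ⟨hpos, max k₁ k₂, le_trans hk₁ (le_max_left _ _), ?_⟩
  rw [evperd_iff_evperg]
  have := evperg_combo hE1 hE2 A B
  simpa using this

lemma signal_interval {n : ℕ} {x : ℝ → Fin n → Bool} (hx : IsSignal x) :
    ∀ s : ℝ, ∃ b : ℝ, s < b ∧ ∀ v, s ≤ v → v < b → x v = x s := by
  classical
  obtain ⟨μ₀, ts, hmono, htend, h0, hstep⟩ := hx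
  intro s
  rcases lt_or_ge s (ts 0) with hs | hs
  · exact ⟨ts 0, hs, fun v hv1 hv2 => by rw [h0 v hv2, h0 s hs]⟩
  · obtain ⟨N, hN⟩ := Filter.eventually_atTop.mp (htend.eventually (eventually_gt_atTop s))
    set k := Nat.findGreatest (fun k => ts k ≤ s) N with hk
    have hPk : ts k ≤ s :=
      Nat.findGreatest_spec (P := fun k => ts k ≤ s) (Nat.zero_le N) hs
    have hkN : k < N := by
      by_contra h
      push_neg at h
      exact absurd hPk (not_le.mpr (hN k h))
    have hP1 : ¬ ts (k + 1) ≤ s :=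
      Nat.findGreatest_is_greatest (P := fun k => ts k ≤ s) (Nat.lt_succ_self k) (by omega)
    push_neg at hP1
    exact ⟨ts (k + 1), hP1, fun v hv1 hv2 => by
      rw [hstep k v (le_trans hPk hv1) hv2, hstep k s hPk hP1]⟩

/-- (a) The set of periods of an eventually periodic point of a discrete-time signal is
the set of positive multiples of a prime period; (b) likewise in real time, provided the
signal is not eventually constant. -/
theorem set_of_periods_of_point {n : ℕ} :
    (∀ (xd : ℤ → Fin n → Bool) (μ : Fin n → Bool), μ ∈ omegaD xd →
      (PsetD xd μ).Nonempty →
        ∃ pt : ℤ, 1 ≤ pt ∧ PsetD xd μ = {q : ℤ | ∃ m : ℕ, 1 ≤ m ∧ q = (m : ℤ) * pt}) ∧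
    (∀ x : ℝ → Fin n → Bool, IsSignal x →
      ¬ (∃ (μ : Fin n → Bool) (t' : ℝ), ∀ t : ℝ, t' ≤ t → x t = μ) →
      ∀ μ ∈ omegaR x, (PsetR x μ).Nonempty →
        ∃ Tt : ℝ, 0 < Tt ∧ PsetR x μ = {T : ℝ | ∃ m : ℕ, 1 ≤ m ∧ T = (m : ℝ) * Tt}) := by
  constructor
  · -- part (a)
    intro xd μ _ hne
    obtain ⟨pt, hptmem, hptmin⟩ :=
      Int.exists_least_of_bdd (P := fun p => p ∈ PsetD xd μ)
        ⟨1, fun z hz => hz.1⟩ hne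
    refine ⟨pt, hptmem.1, ?_⟩
    have hpt1 : 1 ≤ pt := hptmem.1
    ext q
    simp only [Set.mem_setOf_eq]
    constructor
    · intro hq
      have hq1 : 1 ≤ q := hq.1
      have hle : pt ≤ q := hptmin q hq
      have hree : pt * (q / pt) + q % pt = q := Int.mul_ediv_add_emod q pt
      have hr0 : 0 ≤ q % pt := Int.emod_nonneg q (by omega)
      have hrlt : q % pt < pt := Int.emod_lt_of_pos q (by omega)
      by_cases hr : q % pt = 0
      · have hqe : q = (q / pt) * pt := by rw [mul_comm]; omega
        have hm1 : 1 ≤ q / pt := by nlinarith [hqe, hle, hpt1]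
        refine ⟨(q / pt).toNat, by omega, ?_⟩
        have : (((q / pt).toNat : ℤ)) = q / pt := Int.toNat_of_nonneg (by omega)
        rw [this]
        exact hqe
      · exfalso
        have hcomb : ((1 : ℤ) * q + (-(q / pt)) * pt) ∈ PsetD xd μ := by
          apply psetD_comb hq hptmem
          have : (1 : ℤ) * q + (-(q / pt)) * pt = q % pt := by
            rw [Int.emod_def]; ring
          rw [this]; omega
        have : (1 : ℤ) * q + (-(q / pt)) * pt = q % pt := by
          rw [Int.emod_def]; ring
        rw [this] at hcomb
        have := hptmin _ hcomb
        omega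
    · rintro ⟨m, hm1, rfl⟩
      have hm1' : (1 : ℤ) ≤ (m : ℤ) := by exact_mod_cast hm1
      refine ⟨by nlinarith, ?_⟩
      obtain ⟨k', hk', hEv⟩ := hptmem.2
      refine ⟨k', hk', ?_⟩
      rw [evperd_iff_evperg] at hEv ⊢
      have := evperg_mul hEv (m : ℤ)
      simpa using this
  · -- part (b)
    intro x hsig hnec μ homega hne
    have hocc : ∀ M : ℝ, ∃ u, M ≤ u ∧ x u = μ := by
      intro M
      rw [omegaR, Set.mem_setOf_eq, not_bddAbove_iff] at homega
      obtain ⟨y, hy, hMy⟩ := homega M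
      exact ⟨y, hMy.le, hy⟩
    have hnmu : ∀ M : ℝ, ∃ s, M ≤ s ∧ x s ≠ μ := by
      intro M
      by_contra h
      push_neg at h
      exact hnec ⟨μ, M, fun t ht => h t ht⟩
    obtain ⟨T₀, hT₀⟩ := hne
    obtain ⟨hT₀pos, t₀', hEv₀⟩ := hT₀
    obtain ⟨s₁, hs₁ge, hs₁⟩ := hnmu t₀'
    obtain ⟨b₁, hb₁, hconst⟩ := signal_interval hsig s₁
    -- recurring non-μ intervals of fixed length
    have hrec : ∀ j : ℕ, ∀ v : ℝ, s₁ + j * T₀ ≤ v → v < b₁ + j * T₀ → x v ≠ μ := by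
      intro j
      induction j with
      | zero =>
        intro v h1 h2 hv
        push_cast at h1 h2
        exact hs₁ ((hconst v (by linarith) (by linarith)).symm.trans hv)
      | succ j ih =>
        intro v h1 h2 hv
        push_cast at h1 h2
        have hv' : x (v + (-1 : ℤ) * T₀) = μ := by
          apply hEv₀ v (by nlinarith [hs₁ge]) hv (-1)
          push_cast
          nlinarith [hs₁ge]
        have e : v + ((-1 : ℤ) : ℝ) * T₀ = v - T₀ := by push_cast; ring
        rw [e] at hv'
        exact ih (v - T₀) (by push_cast; linarith) (by push_cast; linarith) hv'
    set ℓ := b₁ - s₁ with hℓdef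
    have hℓpos : 0 < ℓ := by simp [hℓdef]; linarith
    -- lower bound for all periods
    have hlb : ∀ T ∈ PsetR x μ, ℓ ≤ T := by
      intro T hT
      by_contra hTl
      push_neg at hTl
      obtain ⟨hTpos, t', hEv⟩ := hT
      obtain ⟨u, hu, huμ⟩ := hocc t'
      obtain ⟨j, hj⟩ : ∃ j : ℕ, t' ≤ s₁ + j * T₀ := by
        obtain ⟨j, hj⟩ := exists_nat_ge ((t' - s₁) / T₀)
        refine ⟨j, ?_⟩
        rw [div_le_iff₀ hT₀pos] at hj
        linarith
      set A := s₁ + j * T₀ with hA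
      set z := ⌈(A - u) / T⌉ with hz
      have hz1 : A - u ≤ z * T := by
        have := Int.le_ceil ((A - u) / T)
        rw [div_le_iff₀ hTpos] at this
        exact this
      have hz2 : (z : ℝ) * T < A - u + T := by
        have h1 : (z : ℝ) < (A - u) / T + 1 := Int.ceil_lt_add_one _
        have h2 : ((A - u) / T) * T = A - u := div_mul_cancel₀ _ (ne_of_gt hTpos)
        nlinarith
      have hvμ : x (u + z * T) = μ := hEv u hu huμ z (by linarith)
      exact hrec j (u + z * T) (by linarith) (by simp only [hℓdef] at hTl; linarith) hvμ
    have hbdd : BddBelow (PsetR x μ) := ⟨ℓ, fun T hT => hlb T hT⟩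
    have hne' : (PsetR x μ).Nonempty := ⟨T₀, hT₀pos, t₀', hEv₀⟩
    have hIl : ℓ ≤ sInf (PsetR x μ) := le_csInf hne' hlb
    obtain ⟨a, haS, hal⟩ : ∃ a ∈ PsetR x μ, a < sInf (PsetR x μ) + ℓ :=
      exists_lt_of_csInf_lt hne' (by linarith)
    have hmin : ∀ c ∈ PsetR x μ, a ≤ c := by
      intro c hc
      by_contra h
      push_neg at h
      have hdiff : ((1 : ℤ) : ℝ) * a + ((-1 : ℤ) : ℝ) * c ∈ PsetR x μ := by
        apply psetR_comb haS hc 1 (-1)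
        push_cast
        have := hlb c hc
        linarith
      have e : ((1 : ℤ) : ℝ) * a + ((-1 : ℤ) : ℝ) * c = a - c := by push_cast; ring
      rw [e] at hdiff
      have h1 : ℓ ≤ a - c := hlb _ hdiff
      have h2 : sInf (PsetR x μ) ≤ c := csInf_le hbdd hc
      linarith
    have hapos : 0 < a := haS.1
    refine ⟨a, hapos, ?_⟩
    ext q
    simp only [Set.mem_setOf_eq]
    constructor
    · intro hq
      have haq : a ≤ q := hmin q hq
      set m := ⌊q / a⌋ with hm
      have hm1 : 1 ≤ m := by
        rw [hm, Int.le_floor]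
        push_cast
        rw [le_div_iff₀ hapos]
        linarith
      have hfl : (m : ℝ) * a ≤ q := by
        have := Int.floor_le (q / a)
        rw [le_div_iff₀ hapos] at this
        exact this
      have hfl2 : q < (m : ℝ) * a + a := by
        have h1 : (q / a) < (m : ℝ) + 1 := Int.lt_floor_add_one _
        have h2 : (q / a) * a = q := div_mul_cancel₀ _ (ne_of_gt hapos)
        nlinarith
      rcases eq_or_lt_of_le hfl with h0 | h0
      · refine ⟨m.toNat, by omega, ?_⟩
        have e : ((m.toNat : ℕ) : ℝ) = (m : ℝ) := by
          exact_mod_cast congrArg (fun z : ℤ => (z : ℝ)) (Int.toNat_of_nonneg (by omega))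
        rw [e]
        linarith
      · exfalso
        have hrP : ((1 : ℤ) : ℝ) * q + ((-m : ℤ) : ℝ) * a ∈ PsetR x μ := by
          apply psetR_comb hq haS 1 (-m)
          push_cast
          linarith
        have e : ((1 : ℤ) : ℝ) * q + ((-m : ℤ) : ℝ) * a = q - m * a := by push_cast; ring
        rw [e] at hrP
        have := hmin _ hrP
        linarith
    · rintro ⟨m, hm1, rfl⟩
      have hm1' : (1 : ℝ) ≤ (m : ℝ) := by exact_mod_cast hm1
      refine ⟨by nlinarith, ?_⟩
      obtain ⟨t', hEv⟩ := haS.2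
      refine ⟨t', ?_⟩
      rw [evperr_iff_evperg] at hEv ⊢
      have := evperg_mul hEv (m : ℤ)
      have e : (((m : ℤ)) : ℝ) = ((m : ℕ) : ℝ) := by push_cast; ring
      rwa [e] at this
end

section
/- Suppose the discrete-time signal x̂ and the real-time signal x are both not eventually constant and x is the step-h interpolation of x̂ based at t₀ (for some t₀ ∈ ℝ, h > 0), and let μ ∈ ω̂(x̂) (= ω(x)). (a) If p ≥ 1 and k' ≥ -1 are such that μ satisfies the eventual periodicity condition for x̂ with period p and limit k', then there exists t' ∈ ℝ such that μ satisfies the eventual periodicity condition for x with period T = p·h and limit t'. (b) If T > 0 and t' ∈ ℝ are such that μ satisfies the eventual periodicity condition for x with period T and limit t', then T/h is a positive integer and there exists k' ≥ -1 such that μ satisfies the eventual periodicity condition for x̂ with period p = T/h and limit k'. -/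
open Set Filter

/-- `x` is the step-`h` interpolation of `xd` based at `t₀`. -/
def StepInterp {n : ℕ} (xd : ℤ → Fin n → Bool) (x : ℝ → Fin n → Bool) (t₀ h : ℝ) : Prop :=
  (∀ s, s < t₀ → x s = xd (-1)) ∧
    ∀ k : ℕ, ∀ s, t₀ + k * h ≤ s → s < t₀ + (k + 1) * h → x s = xd k

/-- Discrete-time versus real-time eventual periodicity of a point, for the step-`h`
interpolation of a (not eventually constant) discrete-time signal. -/
theorem eventual_periodicity_discrete_vs_real {n : ℕ}
    (xd : ℤ → Fin n → Bool) (x : ℝ → Fin n → Bool) (t₀ h : ℝ) (hh : 0 < h)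
    (hint : StepInterp xd x t₀ h)
    (hncD : ¬ ∃ (μ : Fin n → Bool) (k' : ℤ), -1 ≤ k' ∧ ∀ k : ℤ, k' ≤ k → xd k = μ)
    (hncR : ¬ ∃ (μ : Fin n → Bool) (t' : ℝ), ∀ t : ℝ, t' ≤ t → x t = μ)
    (μ : Fin n → Bool) (hμ : μ ∈ omegaD xd) :
    (∀ p k' : ℤ, 1 ≤ p → -1 ≤ k' → EvPerD xd μ p k' →
      ∃ t' : ℝ, EvPerR x μ ((p : ℝ) * h) t') ∧
    (∀ T t' : ℝ, 0 < T → EvPerR x μ T t' →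
      ∃ p : ℤ, 1 ≤ p ∧ T = (p : ℝ) * h ∧ ∃ k' : ℤ, -1 ≤ k' ∧ EvPerD xd μ p k') := by
  obtain ⟨hpre, hstep⟩ := hint
  -- evaluation of x on step intervals
  have heval : ∀ (k : ℤ), 0 ≤ k → ∀ s : ℝ, 0 ≤ s → s < h → x (t₀ + k * h + s) = xd k := by
    intro k hk s hs0 hs1
    have hcast : ((k.toNat : ℕ) : ℝ) = (k : ℝ) := by exact_mod_cast Int.toNat_of_nonneg hk
    have h1 : t₀ + (k.toNat : ℕ) * h ≤ t₀ + k * h + s := by rw [hcast]; linarith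
    have h2 : t₀ + k * h + s < t₀ + ((k.toNat : ℕ) + 1) * h := by rw [hcast]; nlinarith
    have := hstep k.toNat _ h1 h2
    rw [this, Int.toNat_of_nonneg hk]
  have heval0 : ∀ (k : ℤ), 0 ≤ k → x (t₀ + k * h) = xd k := by
    intro k hk
    have := heval k hk 0 le_rfl hh
    simpa using this
  -- evaluation via floor
  have heval' : ∀ t : ℝ, t₀ ≤ t → x t = xd ⌊(t - t₀) / h⌋ := by
    intro t ht
    have hk0 : 0 ≤ ⌊(t - t₀) / h⌋ := Int.floor_nonneg.2 (div_nonneg (by linarith) hh.le)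
    have h1 : ((⌊(t - t₀) / h⌋ : ℤ) : ℝ) ≤ (t - t₀) / h := Int.floor_le _
    have h2 : (t - t₀) / h < (⌊(t - t₀) / h⌋ : ℝ) + 1 := Int.lt_floor_add_one _
    have h1' : ((⌊(t - t₀) / h⌋ : ℤ) : ℝ) * h ≤ t - t₀ := (le_div_iff₀ hh).1 h1
    have h2' : t - t₀ < ((⌊(t - t₀) / h⌋ : ℝ) + 1) * h := (div_lt_iff₀ hh).1 h2
    have := heval _ hk0 (t - t₀ - (⌊(t - t₀) / h⌋ : ℝ) * h) (by linarith) (by nlinarith)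
    rwa [show t₀ + (⌊(t - t₀) / h⌋ : ℝ) * h + (t - t₀ - (⌊(t - t₀) / h⌋ : ℝ) * h) = t from by ring]
      at this
  constructor
  · -- (a) discrete → real
    intro p k' hp hk' hED
    refine ⟨t₀ + ((max k' 0 : ℤ) : ℝ) * h, ?_⟩
    intro t ht hxt z hz
    have hm0 : (0 : ℤ) ≤ max k' 0 := le_max_right _ _
    have hmh : (0 : ℝ) ≤ ((max k' 0 : ℤ) : ℝ) * h :=
      mul_nonneg (by exact_mod_cast hm0) hh.le
    have ht0 : t₀ ≤ t := by linarith
    have ht0' : t₀ ≤ t + (z : ℝ) * ((p : ℝ) * h) := by linarith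
    have hkm : max k' 0 ≤ ⌊(t - t₀) / h⌋ :=
      Int.le_floor.2 ((le_div_iff₀ hh).2 (by linarith))
    have hxk : xd ⌊(t - t₀) / h⌋ = μ := by rw [← heval' t ht0]; exact hxt
    have hfl : ⌊(t + (z : ℝ) * ((p : ℝ) * h) - t₀) / h⌋ = ⌊(t - t₀) / h⌋ + z * p := by
      have he : (t + (z : ℝ) * ((p : ℝ) * h) - t₀) / h = (t - t₀) / h + ((z * p : ℤ) : ℝ) := by
        field_simp
        push_cast
        ring
      rw [he, Int.floor_add_intCast]
    have h3 : max k' 0 ≤ ⌊(t + (z : ℝ) * ((p : ℝ) * h) - t₀) / h⌋ :=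
      Int.le_floor.2 ((le_div_iff₀ hh).2 (by linarith))
    rw [hfl] at h3
    rw [heval' _ ht0', hfl]
    exact hED _ (le_trans (le_max_left _ _) hkm) hxk z (le_trans (le_max_left _ _) h3)
  · -- (b) real → discrete
    intro T t' hT hER
    set q : ℤ := ⌊T / h⌋ with hqdef
    have hq0 : 0 ≤ q := Int.floor_nonneg.2 (div_nonneg hT.le hh.le)
    have hr0 : 0 ≤ T - (q : ℝ) * h := by
      have h1 : ((q : ℤ) : ℝ) ≤ T / h := Int.floor_le _
      have := (le_div_iff₀ hh).1 h1
      linarith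
    have hr1 : T - (q : ℝ) * h < h := by
      have h2 : T / h < (q : ℝ) + 1 := Int.lt_floor_add_one _
      have := (div_lt_iff₀ hh).1 h2
      nlinarith
    obtain ⟨K, hK0, hKt⟩ : ∃ K : ℤ, 0 ≤ K ∧ t' ≤ t₀ + (K : ℝ) * h := by
      refine ⟨max 0 ⌈(t' - t₀) / h⌉, le_max_left _ _, ?_⟩
      have h1 : (t' - t₀) / h ≤ ((max 0 ⌈(t' - t₀) / h⌉ : ℤ) : ℝ) := by
        refine le_trans (Int.le_ceil _) ?_
        exact_mod_cast le_max_right (0 : ℤ) _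
      have := (div_le_iff₀ hh).1 h1
      linarith
    have hstep_ge : ∀ k : ℤ, K ≤ k → ∀ s : ℝ, 0 ≤ s → t' ≤ t₀ + (k : ℝ) * h + s := by
      intro k hk s hs
      have : (K : ℝ) * h ≤ (k : ℝ) * h := by
        apply mul_le_mul_of_nonneg_right _ hh.le
        exact_mod_cast hk
      linarith
    by_cases hrz : T - (q : ℝ) * h = 0
    · -- T is an integer multiple of h
      have hTqh : T = (q : ℝ) * h := by linarith
      have hq1 : 1 ≤ q := by
        rcases lt_or_ge q 1 with hlt | hle
        · exfalso
          have hq0' : q ≤ 0 := by omega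
          have hq0'' : (q : ℝ) ≤ 0 := by exact_mod_cast hq0'
          nlinarith
        · exact hle
      refine ⟨q, hq1, hTqh, K, by omega, ?_⟩
      intro k hk hxk z hz
      have hk0 : 0 ≤ k := le_trans hK0 hk
      have ht' : t' ≤ t₀ + (k : ℝ) * h := by
        have := hstep_ge k hk 0 le_rfl
        simpa using this
      have eshift : (t₀ + (k : ℝ) * h) + (z : ℝ) * T = t₀ + ((k + z * q : ℤ) : ℝ) * h := by
        rw [hTqh]; push_cast; ring
      have hz' : t' ≤ (t₀ + (k : ℝ) * h) + (z : ℝ) * T := by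
        rw [eshift]
        have := hstep_ge (k + z * q) hz 0 le_rfl
        simpa using this
      have := hER (t₀ + (k : ℝ) * h) ht' (by rw [heval0 k hk0]; exact hxk) z hz'
      rw [eshift, heval0 _ (by omega)] at this
      exact this
    · -- T is not a multiple of h : derive a contradiction
      exfalso
      have hr0' : 0 < T - (q : ℝ) * h := lt_of_le_of_ne hr0 (Ne.symm hrz)
      have hiff : ∀ t : ℝ, t' ≤ t → t' ≤ t + T → (x t = μ ↔ x (t + T) = μ) := by
        intro t h1 h2
        constructor
        · intro hx
          have := hER t h1 hx 1 (by push_cast; linarith)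
          simpa using this
        · intro hx
          have := hER (t + T) h2 hx (-1) (by push_cast; linarith)
          have e : t + T + ((-1 : ℤ) : ℝ) * T = t := by push_cast; ring
          rwa [e] at this
      have hC1 : ∀ k : ℤ, K ≤ k → (xd k = μ ↔ xd (k + q) = μ) := by
        intro k hk
        have hk0 : 0 ≤ k := le_trans hK0 hk
        have e2 : (t₀ + (k : ℝ) * h) + T = t₀ + ((k + q : ℤ) : ℝ) * h + (T - (q : ℝ) * h) := by
          push_cast; ring
        have e3 : x ((t₀ + (k : ℝ) * h) + T) = xd (k + q) := by
          rw [e2]; exact heval (k + q) (by omega) _ hr0 hr1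
        have h1 : t' ≤ t₀ + (k : ℝ) * h := by
          have := hstep_ge k hk 0 le_rfl
          simpa using this
        have h2 : t' ≤ (t₀ + (k : ℝ) * h) + T := by linarith
        have := hiff (t₀ + (k : ℝ) * h) h1 h2
        rw [heval0 k hk0, e3] at this
        exact this
      have hC2 : ∀ k : ℤ, K ≤ k → (xd k = μ ↔ xd (k + q + 1) = μ) := by
        intro k hk
        have hk0 : 0 ≤ k := le_trans hK0 hk
        have e1 : x (t₀ + (k : ℝ) * h + (h - (T - (q : ℝ) * h))) = xd k :=
          heval k hk0 _ (by linarith) (by linarith)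
        have e2 : (t₀ + (k : ℝ) * h + (h - (T - (q : ℝ) * h))) + T
            = t₀ + ((k + q + 1 : ℤ) : ℝ) * h := by
          push_cast; ring
        have e3 : x ((t₀ + (k : ℝ) * h + (h - (T - (q : ℝ) * h))) + T) = xd (k + q + 1) := by
          rw [e2]; exact heval0 (k + q + 1) (by omega)
        have h1 : t' ≤ t₀ + (k : ℝ) * h + (h - (T - (q : ℝ) * h)) :=
          hstep_ge k hk _ (by linarith)
        have h2 : t' ≤ (t₀ + (k : ℝ) * h + (h - (T - (q : ℝ) * h))) + T := by linarith
        have := hiff _ h1 h2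
        rw [e1, e3] at this
        exact this
      have hCc : ∀ m : ℤ, K + q ≤ m → (xd m = μ ↔ xd (m + 1) = μ) := by
        intro m hm
        have h1 := hC1 (m - q) (by omega)
        have h2 := hC2 (m - q) (by omega)
        rw [show m - q + q = m from by ring] at h1 h2
        exact h1.symm.trans h2
      have hconst : ∀ m : ℤ, K + q ≤ m → (xd m = μ ↔ xd (K + q) = μ) := by
        intro m hm
        refine Int.le_induction (motive := fun i _ => xd i = μ ↔ xd (K + q) = μ) ?_ ?_ m hm
        · exact Iff.rfl
        · intro m hm ih
          exact (hCc m hm).symm.trans ih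
      by_cases hb : xd (K + q) = μ
      · exact hncD ⟨μ, K + q, by omega, fun k hk => (hconst k hk).2 hb⟩
      · have hsub : {k : ℤ | -1 ≤ k ∧ xd k = μ} ⊆ Set.Icc (-1) (K + q) := by
          intro k hk
          refine ⟨hk.1, ?_⟩
          by_contra hlt
          push_neg at hlt
          exact hb ((hconst k (by omega)).1 hk.2)
        exact hμ ((Set.finite_Icc _ _).subset hsub)
end

section
/- Let x be a real-time signal that is not eventually constant, μ ∈ ω(x), T > 0 and t' ∈ ℝ such that μ satisfies the eventual periodicity condition for x with period T and limit t'. Then there exist k₁ ≥ 1 and real numbers a₁, b₁, …, a_{k₁}, b_{k₁} with t' ≤ a₁ < b₁ < a₂ < b₂ < … < a_{k₁} < b_{k₁} ≤ t' + T such that T_μ^x ∩ [t', ∞) = ⋃_{k ∈ ℕ} ([a₁ + k·T, b₁ + k·T) ∪ [a₂ + k·T, b₂ + k·T) ∪ … ∪ [a_{k₁} + k·T, b_{k₁} + k·T)). -/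
open Set Filter

lemma localMono {p : ℕ → ℝ} {m : ℕ} (hp : ∀ i < m, p i < p (i+1)) :
    ∀ i j, i ≤ j → j ≤ m → p i ≤ p j := by
  intro i j hij hjm
  induction j with
  | zero => simp_all
  | succ j ih =>
    rcases Nat.eq_or_lt_of_le hij with h | h
    · rw [h]
    · exact le_trans (ih (by omega) (by omega)) (le_of_lt (hp j (by omega)))

lemma findPiece {p : ℕ → ℝ} {m : ℕ} (hp : ∀ i < m, p i < p (i+1)) {s : ℝ}
    (h0 : p 0 ≤ s) (hm : s < p m) : ∃ i, i < m ∧ p i ≤ s ∧ s < p (i+1) := by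
  induction m with
  | zero => exact absurd (lt_of_le_of_lt h0 hm) (lt_irrefl _)
  | succ m ih =>
    by_cases h : s < p m
    · obtain ⟨i, hi, h1, h2⟩ := ih (fun i hi => hp i (by omega)) h
      exact ⟨i, by omega, h1, h2⟩
    · exact ⟨m, by omega, le_of_not_gt h, hm⟩

lemma stepRep (m : ℕ) (p : ℕ → ℝ) (v : ℕ → Prop)
    (hp : ∀ i < m, p i < p (i+1))
    (hne : ∃ i, i < m ∧ v i) :
    ∃ (k₁ : ℕ) (a b : ℕ → ℝ), 1 ≤ k₁ ∧
      p 0 ≤ a 0 ∧ (∀ i < k₁, a i < b i) ∧ (∀ i, i + 1 < k₁ → b i < a (i + 1)) ∧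
      b (k₁ - 1) ≤ p m ∧
      {s : ℝ | ∃ i, i < m ∧ v i ∧ p i ≤ s ∧ s < p (i+1)} =
        ⋃ i ∈ Finset.range k₁, Set.Ico (a i) (b i) := by
  classical
  induction m with
  | zero => obtain ⟨i, hi, _⟩ := hne; omega
  | succ m ih =>
    have hp' : ∀ i < m, p i < p (i+1) := fun i hi => hp i (by omega)
    have hS : {s : ℝ | ∃ i, i < m + 1 ∧ v i ∧ p i ≤ s ∧ s < p (i+1)} =
        {s : ℝ | ∃ i, i < m ∧ v i ∧ p i ≤ s ∧ s < p (i+1)} ∪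
          (if v m then Set.Ico (p m) (p (m+1)) else ∅) := by
      ext s
      simp only [Set.mem_setOf_eq, Set.mem_union]
      constructor
      · rintro ⟨i, hi, hv, h1, h2⟩
        rcases Nat.lt_succ_iff_lt_or_eq.mp hi with h | h
        · exact Or.inl ⟨i, h, hv, h1, h2⟩
        · subst h; right; simp [hv, Set.mem_Ico]; exact ⟨h1, h2⟩
      · rintro (⟨i, hi, hv, h1, h2⟩ | h)
        · exact ⟨i, by omega, hv, h1, h2⟩
        · by_cases hv : v m
          · simp [hv, Set.mem_Ico] at h
            exact ⟨m, by omega, hv, h.1, h.2⟩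
          · simp [hv] at h
    by_cases hvm : v m
    · simp only [hvm, if_true] at hS
      by_cases hbe : ∃ i, i < m ∧ v i
      · obtain ⟨k, a, b, hk1, ha0, hab, hsep, hbm, hU⟩ := ih hp' hbe
        rcases eq_or_lt_of_le hbm with heq | hlt
        · -- extend last interval
          refine ⟨k, a, Function.update b (k-1) (p (m+1)), hk1, ha0, ?_, ?_, ?_, ?_⟩
          · intro i hi
            by_cases h : i = k - 1
            · subst h
              rw [Function.update_self]
              exact lt_of_lt_of_le (hab _ (by omega)) (by rw [heq]; exact le_of_lt (hp m (by omega)))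
            · rw [Function.update_of_ne h]; exact hab i hi
          · intro i hi
            rw [Function.update_of_ne (by omega)]
            exact hsep i hi
          · rw [Function.update_self]
          · rw [hS, hU]
            ext s
            simp only [Set.mem_union, Set.mem_iUnion, Finset.mem_range, Set.mem_Ico]
            constructor
            · rintro (⟨i, hi, h1, h2⟩ | ⟨h1, h2⟩)
              · refine ⟨i, hi, h1, ?_⟩
                by_cases h : i = k - 1
                · subst h; rw [Function.update_self]
                  exact lt_of_lt_of_le h2 (by rw [heq]; exact le_of_lt (hp m (by omega)))
                · rw [Function.update_of_ne h]; exact h2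
              · refine ⟨k - 1, by omega, le_trans (le_of_lt (hab _ (by omega))) (by rw [heq]; exact h1), ?_⟩
                rw [Function.update_self]; exact h2
            · rintro ⟨i, hi, h1, h2⟩
              by_cases h : i = k - 1
              · subst h
                rw [Function.update_self] at h2
                by_cases hs : s < b (k-1)
                · exact Or.inl ⟨k-1, by omega, h1, hs⟩
                · exact Or.inr ⟨by rw [← heq]; exact le_of_not_gt hs, h2⟩
              · rw [Function.update_of_ne h] at h2
                exact Or.inl ⟨i, hi, h1, h2⟩
        · -- append new interval
          refine ⟨k + 1, Function.update a k (p m), Function.update b k (p (m+1)),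
            by omega, ?_, ?_, ?_, ?_, ?_⟩
          · rw [Function.update_of_ne (by omega)]; exact ha0
          · intro i hi
            by_cases h : i = k
            · subst h; rw [Function.update_self, Function.update_self]
              exact hp m (by omega)
            · rw [Function.update_of_ne h, Function.update_of_ne h]
              exact hab i (by omega)
          · intro i hi
            by_cases h : i + 1 = k
            · rw [Function.update_of_ne (by omega), h, Function.update_self]
              have : i = k - 1 := by omega
              subst this; exact hlt
            · rw [Function.update_of_ne (by omega), Function.update_of_ne (by omega)]
              exact hsep i (by omega)
          · have : k + 1 - 1 = k := by omega
            rw [this, Function.update_self]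
          · rw [hS, hU]
            ext s
            simp only [Set.mem_union, Set.mem_iUnion, Finset.mem_range, Set.mem_Ico]
            constructor
            · rintro (⟨i, hi, h1, h2⟩ | ⟨h1, h2⟩)
              · exact ⟨i, by omega, by rw [Function.update_of_ne (by omega)]; exact h1,
                  by rw [Function.update_of_ne (by omega)]; exact h2⟩
              · exact ⟨k, by omega, by rw [Function.update_self]; exact h1,
                  by rw [Function.update_self]; exact h2⟩
            · rintro ⟨i, hi, h1, h2⟩
              by_cases h : i = k
              · subst h
                rw [Function.update_self] at h1 h2
                exact Or.inr ⟨h1, h2⟩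
              · rw [Function.update_of_ne h] at h1 h2
                exact Or.inl ⟨i, by omega, h1, h2⟩
      · -- first interval
        refine ⟨1, fun _ => p m, fun _ => p (m+1), le_refl _,
          localMono hp 0 m (by omega) (by omega), fun i _ => hp m (by omega),
          by omega, le_refl _, ?_⟩
        rw [hS]
        have : {s : ℝ | ∃ i, i < m ∧ v i ∧ p i ≤ s ∧ s < p (i+1)} = ∅ := by
          ext s; simp only [Set.mem_setOf_eq, Set.mem_empty_iff_false, iff_false]
          rintro ⟨i, hi, hv, _⟩; exact hbe ⟨i, hi, hv⟩
        rw [this]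
        simp
    · simp only [hvm, if_false, Set.union_empty] at hS
      rw [hS]
      have hbe : ∃ i, i < m ∧ v i := by
        obtain ⟨i, hi, hv⟩ := hne
        exact ⟨i, by rcases Nat.lt_succ_iff_lt_or_eq.mp hi with h|h; exact h; (subst h; exact absurd hv hvm), hv⟩
      obtain ⟨k, a, b, hk1, ha0, hab, hsep, hbm, hU⟩ := ih hp' hbe
      exact ⟨k, a, b, hk1, ha0, hab, hsep, le_trans hbm (le_of_lt (hp m (by omega))), hU⟩

lemma const_between {n : ℕ} {x : ℝ → Fin n → Bool} {μ₀ : Fin n → Bool} {tq : ℕ → ℝ}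
    (hmono : StrictMono tq) (htend : Tendsto tq atTop atTop)
    (h0 : ∀ s, s < tq 0 → x s = μ₀)
    (hstep : ∀ k : ℕ, ∀ s, tq k ≤ s → s < tq (k+1) → x s = x (tq k))
    {u s : ℝ} (hus : u ≤ s) (hgap : ∀ k, ¬ (u < tq k ∧ tq k ≤ s)) :
    x s = x u := by
  by_cases hs : s < tq 0
  · rw [h0 s hs, h0 u (lt_of_le_of_lt hus hs)]
  push_neg at hs
  have hP : ∃ N, s < tq N := (htend.eventually_gt_atTop s).exists
  set N := Nat.find hP with hNdef
  have hN : s < tq N := Nat.find_spec hP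
  have hN0 : N ≠ 0 := by
    intro h
    rw [h] at hN
    exact absurd hs (not_le_of_gt hN)
  have hk1 : ¬ s < tq (N - 1) := Nat.find_min hP (by omega)
  push_neg at hk1
  have hk2 : s < tq (N - 1 + 1) := by
    have : N - 1 + 1 = N := by omega
    rwa [this]
  have hxu : tq (N-1) ≤ u := by
    by_contra h
    exact hgap (N-1) ⟨lt_of_not_ge h, hk1⟩
  rw [hstep (N-1) s hk1 hk2, hstep (N-1) u hxu (lt_of_le_of_lt hus hk2)]

/-- Necessity condition of eventual periodicity: the support set of an eventually periodic
point of a not eventually constant signal is, beyond the limit of periodicity, a periodic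
union of finitely many half-open intervals contained in one period window. -/
theorem support_structure_of_eventually_periodic_point {n : ℕ}
    (x : ℝ → Fin n → Bool) (hx : IsSignal x)
    (hnc : ¬ ∃ (ν : Fin n → Bool) (s' : ℝ), ∀ t : ℝ, s' ≤ t → x t = ν)
    (μ : Fin n → Bool) (hμ : μ ∈ omegaR x) (T t' : ℝ) (hT : 0 < T)
    (hper : EvPerR x μ T t') :
    ∃ (k₁ : ℕ) (a b : ℕ → ℝ), 1 ≤ k₁ ∧
      t' ≤ a 0 ∧ (∀ i < k₁, a i < b i) ∧ (∀ i, i + 1 < k₁ → b i < a (i + 1)) ∧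
      b (k₁ - 1) ≤ t' + T ∧
      {t : ℝ | x t = μ} ∩ Set.Ici t' =
        ⋃ k : ℕ, ⋃ i ∈ Finset.range k₁,
          Set.Ico (a i + (k : ℝ) * T) (b i + (k : ℝ) * T) := by
  classical
  obtain ⟨μ₀, tq, hmono, htend, h0, hstep⟩ := hx
  obtain ⟨N, hN⟩ := (htend.eventually_gt_atTop (t' + T)).exists
  set F : Finset ℝ := insert t' (insert (t' + T)
    (((Finset.range N).image tq).filter (fun r => t' < r ∧ r < t' + T))) with hF
  have ht'F : t' ∈ F := Finset.mem_insert_self _ _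
  have htTF : t' + T ∈ F := by simp [hF]
  have hFlb : ∀ r ∈ F, t' ≤ r := by
    intro r hr
    simp only [hF, Finset.mem_insert, Finset.mem_filter] at hr
    rcases hr with h | h | h
    · exact le_of_eq h.symm
    · rw [h]; linarith
    · exact le_of_lt h.2.1
  have hFub : ∀ r ∈ F, r ≤ t' + T := by
    intro r hr
    simp only [hF, Finset.mem_insert, Finset.mem_filter] at hr
    rcases hr with h | h | h
    · rw [h]; linarith
    · exact le_of_eq h
    · exact le_of_lt h.2.2
  have htqF : ∀ k, t' < tq k → tq k < t' + T → tq k ∈ F := by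
    intro k h1 h2
    have hk : k < N := by
      by_contra h
      have := hmono.monotone (le_of_not_gt h)
      linarith
    simp only [hF, Finset.mem_insert, Finset.mem_filter, Finset.mem_image,
      Finset.mem_range]
    exact Or.inr (Or.inr ⟨⟨k, hk, rfl⟩, h1, h2⟩)
  set c := F.card with hc
  have hc1 : 0 < c := Finset.card_pos.mpr ⟨t', ht'F⟩
  set e := F.orderIsoOfFin rfl with he
  set p : ℕ → ℝ := fun i => if h : i < c then (e ⟨i, h⟩ : ℝ) else 0 with hpdef
  have hpF : ∀ i, i < c → p i ∈ F := by
    intro i hi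
    simp only [hpdef, dif_pos hi]
    exact (e ⟨i, hi⟩).2
  have hmonoP : ∀ i j, i < j → j < c → p i < p j := by
    intro i j hij hj
    simp only [hpdef, dif_pos hj, dif_pos (lt_trans hij hj)]
    exact_mod_cast e.strictMono (show (⟨i, lt_trans hij hj⟩ : Fin c) < ⟨j, hj⟩ from hij)
  have hmonoP' : ∀ i j, i ≤ j → j < c → p i ≤ p j := by
    intro i j hij hj
    rcases Nat.eq_or_lt_of_le hij with h | h
    · rw [h]
    · exact le_of_lt (hmonoP i j h hj)
  set m := c - 1 with hm
  have hsurj : ∀ r ∈ F, ∃ i, i < c ∧ p i = r := by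
    intro r hr
    obtain ⟨j, hj⟩ := e.surjective ⟨r, hr⟩
    refine ⟨j, j.2, ?_⟩
    simp only [hpdef, dif_pos j.2, Fin.eta, hj]
    exact dif_pos j.2
  have hp0 : p 0 = t' := by
    obtain ⟨i, hi, hpi⟩ := hsurj t' ht'F
    exact le_antisymm (hpi ▸ hmonoP' 0 i (Nat.zero_le _) hi) (hFlb _ (hpF 0 hc1))
  have hpm : p m = t' + T := by
    obtain ⟨i, hi, hpi⟩ := hsurj (t' + T) htTF
    exact le_antisymm (hFub _ (hpF m (by omega))) (hpi ▸ hmonoP' i m (by omega) (by omega))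
  have hploc : ∀ i < m, p i < p (i+1) := fun i hi => hmonoP i (i+1) (by omega) (by omega)
  have hconst : ∀ i, i < m → ∀ s, p i ≤ s → s < p (i+1) → x s = x (p i) := by
    intro i hi s h1 h2
    refine const_between hmono htend h0 hstep h1 ?_
    rintro k ⟨hk1, hk2⟩
    have hklt : tq k < p (i+1) := lt_of_le_of_lt hk2 h2
    have hgt' : t' < tq k := lt_of_le_of_lt (hp0 ▸ hmonoP' 0 i (Nat.zero_le _) (by omega)) hk1
    have hltT : tq k < t' + T := lt_of_lt_of_le hklt (hpm ▸ hmonoP' (i+1) m (by omega) (by omega))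
    obtain ⟨j, hj, hpj⟩ := hsurj _ (htqF k hgt' hltT)
    rcases le_or_gt j i with h | h
    · have := hmonoP' j i h (by omega)
      rw [hpj] at this
      linarith
    · have := hmonoP' (i+1) j h (by omega)
      rw [hpj] at this
      linarith
  set v : ℕ → Prop := fun i => x (p i) = μ with hv
  have hA : ∀ s : ℝ, (t' ≤ s ∧ s < t' + T ∧ x s = μ) ↔
      ∃ i, i < m ∧ v i ∧ p i ≤ s ∧ s < p (i+1) := by
    intro s
    constructor
    · rintro ⟨h1, h2, h3⟩
      obtain ⟨i, hi, hi1, hi2⟩ := findPiece hploc (hp0 ▸ h1) (hpm ▸ h2)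
      exact ⟨i, hi, by rw [hv]; dsimp only; rw [← hconst i hi s hi1 hi2]; exact h3, hi1, hi2⟩
    · rintro ⟨i, hi, hvi, h1, h2⟩
      refine ⟨le_trans (hp0 ▸ hmonoP' 0 i (Nat.zero_le _) (by omega)) h1,
        lt_of_lt_of_le h2 (hpm ▸ hmonoP' (i+1) m (by omega) (by omega)), ?_⟩
      rw [hconst i hi s h1 h2]
      exact hvi
  have hex : ∃ s0, t' < s0 ∧ x s0 = μ := by
    by_contra h
    push_neg at h
    exact hμ ⟨t', fun r hr => le_of_not_gt fun hlt => (h r hlt) hr⟩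
  have hrep : ∀ t : ℝ, t' ≤ t → ∃ z : ℤ, 0 ≤ z ∧ t' ≤ t - z * T ∧ t - z * T < t' + T := by
    intro t ht
    refine ⟨⌊(t - t') / T⌋, Int.floor_nonneg.mpr (div_nonneg (by linarith) (le_of_lt hT)), ?_, ?_⟩
    · have := Int.sub_floor_div_mul_nonneg (t - t') hT
      linarith
    · have := Int.sub_floor_div_mul_lt (t - t') hT
      linarith
  have hne : ∃ i, i < m ∧ v i := by
    obtain ⟨s0, hs0, hxs0⟩ := hex
    obtain ⟨z, hz0, hz1, hz2⟩ := hrep s0 (le_of_lt hs0)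
    have hxs := hper s0 (le_of_lt hs0) hxs0 (-z) (by push_cast; linarith)
    push_cast at hxs
    have hxs' : x (s0 - z * T) = μ := by
      have heq : s0 + -(z : ℝ) * T = s0 - (z : ℝ) * T := by ring
      rwa [heq] at hxs
    obtain ⟨i, hi, hvi, _⟩ := (hA _).mp ⟨hz1, hz2, hxs'⟩
    exact ⟨i, hi, hvi⟩
  obtain ⟨k₁, a, b, hk1, ha0, hab, hsep, hbm, hU⟩ := stepRep m p v hploc hne
  rw [hp0] at ha0
  rw [hpm] at hbm
  refine ⟨k₁, a, b, hk1, ha0, hab, hsep, hbm, ?_⟩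
  ext t
  simp only [Set.mem_inter_iff, Set.mem_setOf_eq, Set.mem_Ici, Set.mem_iUnion,
    Finset.mem_range, Set.mem_Ico]
  constructor
  · rintro ⟨hxt, ht⟩
    obtain ⟨z, hz0, hz1, hz2⟩ := hrep t ht
    have hxs := hper t ht hxt (-z) (by push_cast; linarith)
    push_cast at hxs
    have hxs' : x (t - z * T) = μ := by
      have heq : t + -(z : ℝ) * T = t - (z : ℝ) * T := by ring
      rwa [heq] at hxs
    have hmem : (t - (z : ℝ) * T) ∈ ⋃ i ∈ Finset.range k₁, Set.Ico (a i) (b i) := by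
      rw [← hU]
      exact (hA _).mp ⟨hz1, hz2, hxs'⟩
    simp only [Set.mem_iUnion, Finset.mem_range, Set.mem_Ico] at hmem
    obtain ⟨i, hik, h1, h2⟩ := hmem
    have hzr : ((z.toNat : ℕ) : ℝ) = (z : ℝ) := by exact_mod_cast Int.toNat_of_nonneg hz0
    exact ⟨z.toNat, i, hik, by rw [hzr]; linarith, by rw [hzr]; linarith⟩
  · rintro ⟨k, i, hik, h1, h2⟩
    have hs : (t - (k : ℝ) * T) ∈ ⋃ i ∈ Finset.range k₁, Set.Ico (a i) (b i) := by
      simp only [Set.mem_iUnion, Finset.mem_range, Set.mem_Ico]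
      exact ⟨i, hik, by linarith, by linarith⟩
    rw [← hU] at hs
    obtain ⟨hts', htsT, hxts⟩ := (hA _).mpr hs
    have hkT : (0 : ℝ) ≤ (k : ℝ) * T := by positivity
    have hx2 := hper (t - (k : ℝ) * T) hts' hxts (k : ℤ) (by push_cast; linarith)
    have heq : t - (k : ℝ) * T + ((k : ℤ) : ℝ) * T = t := by push_cast; ring
    rw [heq] at hx2
    exact ⟨hx2, by linarith⟩
end

section
/- Let x be a real-time signal, μ ∈ ω(x), T > 0, t' ∈ ℝ and a, b ∈ ℝ with t' ≤ a < b ≤ t' + T such that T_μ^x ∩ [t', ∞) = ⋃_{k ∈ ℕ} [a + k·T, b + k·T). Then: (a) μ satisfies the eventual periodicity condition for x with period T and limit t' (μ is eventually periodic with period T); (b) if moreover x is not eventually constant, then P_μ^x = {T, 2T, 3T, …}, i.e. T is the prime period of μ. -/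
open Set Filter

/-- Special case: if the support set of `μ` beyond `t'` is the periodic repetition of a
single interval `[a, b) ⊆ [t', t' + T)`, then `μ` is eventually periodic with period `T`
and, if `x` is not eventually constant, `T` is the prime period of `μ`. -/
theorem single_interval_prime_period {n : ℕ}
    (x : ℝ → Fin n → Bool) (hx : IsSignal x) (μ : Fin n → Bool) (hμ : μ ∈ omegaR x)
    (T t' a b : ℝ) (hT : 0 < T) (h1 : t' ≤ a) (h2 : a < b) (h3 : b ≤ t' + T)
    (hset : {t : ℝ | x t = μ} ∩ Set.Ici t' =
      ⋃ k : ℕ, Set.Ico (a + (k : ℝ) * T) (b + (k : ℝ) * T)) :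
    EvPerR x μ T t' ∧
      (¬ (∃ (ν : Fin n → Bool) (s' : ℝ), ∀ t : ℝ, s' ≤ t → x t = ν) →
        PsetR x μ = {S : ℝ | ∃ m : ℕ, 1 ≤ m ∧ S = (m : ℝ) * T}) := by
  have hmem : ∀ t : ℝ, (x t = μ ∧ t' ≤ t) ↔ ∃ k : ℕ, a + (k:ℝ) * T ≤ t ∧ t < b + (k:ℝ) * T := by
    intro t
    have := Set.ext_iff.mp hset t
    simpa [Set.mem_iUnion, Set.mem_Ico] using this
  have key : ∀ (k : ℕ) (z : ℤ) (t : ℝ), a + (k:ℝ)*T ≤ t → t < b + (k:ℝ)*T → t' ≤ t + (z:ℝ)*T →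
      x (t + (z:ℝ)*T) = μ := by
    intro k z t h5 h6 h7
    have hpos : (0:ℝ) < T + (k:ℝ)*T + (z:ℝ)*T := by linarith
    have h8 : (0:ℝ) < (k:ℝ) + (z:ℝ) + 1 := by
      by_contra h
      push_neg at h
      nlinarith
    have h9 : (0:ℤ) < (k:ℤ) + z + 1 := by exact_mod_cast h8
    have hz0 : 0 ≤ (k:ℤ) + z := by omega
    set m : ℕ := ((k:ℤ) + z).toNat with hmdef
    have hm : ((m:ℤ) : ℝ) = (k:ℝ) + (z:ℝ) := by
      have := Int.toNat_of_nonneg hz0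
      rw [hmdef]
      push_cast [this]
      ring
    have hm' : (m:ℝ) = (k:ℝ) + (z:ℝ) := by exact_mod_cast hm
    exact ((hmem _).mpr ⟨m, by rw [hm']; linarith, by rw [hm']; linarith⟩).1
  have parta : EvPerR x μ T t' := by
    intro t ht hxt z hz
    obtain ⟨k, hk1, hk2⟩ := (hmem t).mp ⟨hxt, ht⟩
    exact key k z t hk1 hk2 hz
  refine ⟨parta, fun hnc => ?_⟩
  have hba : b - a < T := by
    by_contra hba'
    push_neg at hba'
    have hab : b = a + T := by linarith
    refine hnc ⟨μ, t', fun t ht => ?_⟩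
    have ha : a = t' := by linarith
    have hu : 0 ≤ t - a := by linarith
    set k : ℕ := (⌊(t - a)/T⌋).toNat with hkdef
    have hk0 : 0 ≤ ⌊(t - a)/T⌋ := Int.floor_nonneg.mpr (by positivity)
    have hkc : ((k:ℤ) : ℝ) = (⌊(t - a)/T⌋ : ℝ) := by
      rw [hkdef, Int.toNat_of_nonneg hk0]
    have hfl : (⌊(t - a)/T⌋ : ℝ) ≤ (t - a)/T := Int.floor_le _
    have hfu : (t - a)/T < (⌊(t - a)/T⌋ : ℝ) + 1 := Int.lt_floor_add_one _
    have hl : (k:ℝ) * T ≤ t - a := by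
      rw [show ((k:ℝ)) = ((k:ℤ):ℝ) by push_cast; ring, hkc]
      calc (⌊(t - a)/T⌋ : ℝ) * T ≤ ((t-a)/T) * T := by nlinarith
        _ = t - a := by field_simp
    have hr : t - a < ((k:ℝ) + 1) * T := by
      rw [show ((k:ℝ)) = ((k:ℤ):ℝ) by push_cast; ring, hkc]
      calc t - a = ((t-a)/T) * T := by field_simp
        _ < ((⌊(t - a)/T⌋ : ℝ) + 1) * T := by nlinarith
    exact ((hmem t).mpr ⟨k, by linarith, by rw [hab]; linarith⟩).1
  ext S
  simp only [PsetR, Set.mem_setOf_eq]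
  constructor
  · rintro ⟨hS, s', hper⟩
    obtain ⟨k, hk⟩ := exists_nat_gt ((s' - a)/T)
    have hks : s' ≤ a + (k:ℝ)*T := by
      have := (div_lt_iff₀ hT).mp hk
      linarith
    have hsub : ∀ u : ℝ, a + (k:ℝ)*T ≤ u → u < b + (k:ℝ)*T →
        ∃ j : ℕ, a + (j:ℝ)*T ≤ u + S ∧ u + S < b + (j:ℝ)*T := by
      intro u h5 h6
      have hxu := (hmem u).mpr ⟨k, h5, h6⟩
      have hx1 := hper u (le_trans hks h5) hxu.1 1 (by push_cast; linarith)
      apply (hmem (u+S)).mp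
      constructor
      · simpa using hx1
      · have := hxu.2; linarith
    obtain ⟨j, hj1, hj2⟩ := hsub (a + (k:ℝ)*T) le_rfl (by linarith)
    have hc : a + (k:ℝ)*T + S = a + (j:ℝ)*T := by
      by_contra hne
      have hlt : a + (j:ℝ)*T < a + (k:ℝ)*T + S := lt_of_le_of_ne hj1 (Ne.symm hne)
      obtain ⟨j', hj'1, hj'2⟩ := hsub (b + (j:ℝ)*T - S) (by linarith) (by linarith)
      have e : b + (j:ℝ)*T - S + S = b + (j:ℝ)*T := by ring
      rw [e] at hj'1 hj'2
      have hjj : (j:ℝ) < (j':ℝ) := by nlinarith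
      have hjn : j < j' := by exact_mod_cast hjj
      have hj1j : (j:ℝ) + 1 ≤ (j':ℝ) := by exact_mod_cast hjn
      nlinarith
    have hkj : (k:ℝ) < (j:ℝ) := by nlinarith
    have hkjn : k < j := by exact_mod_cast hkj
    refine ⟨j - k, by omega, ?_⟩
    have : ((j - k : ℕ) : ℝ) = (j:ℝ) - (k:ℝ) := by
      push_cast [Nat.cast_sub hkjn.le]; ring
    rw [this]
    nlinarith
  · rintro ⟨m, hm1, rfl⟩
    refine ⟨by positivity, t', ?_⟩
    intro t ht hxt z hz
    obtain ⟨k, hk1, hk2⟩ := (hmem t).mp ⟨hxt, ht⟩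
    have e : t + (z:ℝ) * ((m:ℝ) * T) = t + ((z * (m:ℤ) : ℤ) : ℝ) * T := by
      push_cast; ring
    rw [e] at hz ⊢
    exact key k (z * (m:ℤ)) t hk1 hk2 hz
end

section
/- Let x be a real-time signal, μ ∈ ω(x), T > 0 and t', t₁, t₂ ∈ ℝ with t' ≤ t₁ < t₂. Suppose μ satisfies the eventual periodicity condition for x with period T and limit t', that [t₁, t₂) ⊆ T_μ^x, and that t₁ + T ≤ t₂. Then [t', ∞) ⊆ T_μ^x. -/
open Set Filter

/-- If an eventually periodic point with period `T` occupies a whole interval of length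
at least `T` beyond the limit of periodicity, then it occupies all of `[t', ∞)`. -/
theorem eventually_constant_of_long_interval {n : ℕ}
    (x : ℝ → Fin n → Bool) (hx : IsSignal x) (μ : Fin n → Bool) (hμ : μ ∈ omegaR x)
    (T t' t₁ t₂ : ℝ) (hT : 0 < T) (h1 : t' ≤ t₁) (h2 : t₁ < t₂)
    (hper : EvPerR x μ T t') (hsub : Set.Ico t₁ t₂ ⊆ {t : ℝ | x t = μ})
    (h3 : t₁ + T ≤ t₂) :
    Set.Ici t' ⊆ {t : ℝ | x t = μ} := by
  intro s hs
  set z : ℤ := ⌊(s - t₁) / T⌋ with hz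
  have h0 : (0:ℝ) ≤ (s - t₁) - z * T := Int.sub_floor_div_mul_nonneg (s - t₁) hT
  have hlt : (s - t₁) - z * T < T := Int.sub_floor_div_mul_lt (s - t₁) hT
  set t : ℝ := s - z * T with ht
  have htmem : t ∈ Set.Ico t₁ t₂ := by
    constructor
    · linarith
    · linarith
  have hxt : x t = μ := hsub htmem
  have := hper t (le_trans h1 htmem.1) hxt z (by simp [ht]; linarith [mem_Ici.mp hs])
  simpa [ht] using this
end

section
/- Let x be a real-time signal and T > 0. The following are equivalent: (i) there exists t' ∈ ℝ with x t = x (t + T) for all t ≥ t' (x is eventually periodic with period T); (ii) for every μ ∈ ω(x) there exists t' ∈ ℝ such that μ satisfies the eventual periodicity condition for x with period T and limit t' (every omega limit point is eventually periodic with period T). -/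
open Set Filter

/-- A real-time signal is eventually periodic with period `T` if and only if every point
of its omega limit set is eventually periodic with period `T`. -/
theorem eventually_periodic_signal_iff_points {n : ℕ}
    (x : ℝ → Fin n → Bool) (hx : IsSignal x) (T : ℝ) (hT : 0 < T) :
    (∃ t' : ℝ, ∀ t : ℝ, t' ≤ t → x t = x (t + T)) ↔
    (∀ μ ∈ omegaR x, ∃ t' : ℝ, EvPerR x μ T t') := by
  classical
  constructor
  · rintro ⟨t', h⟩ μ _
    refine ⟨t', ?_⟩
    have key : ∀ s : ℝ, t' ≤ s → ∀ k : ℕ, x (s + k * T) = x s := by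
      intro s hs k
      induction k with
      | zero => simp
      | succ k ih =>
        have h1 : t' ≤ s + k * T := by
          have : (0:ℝ) ≤ (k:ℝ) * T := mul_nonneg (Nat.cast_nonneg k) hT.le
          linarith
        have h2 := h _ h1
        have h3 : s + ((k:ℕ)+1:ℕ) * T = s + (k:ℝ) * T + T := by push_cast; ring
        rw [h3, ← h2, ih]
    intro t ht hxt z hz
    rcases le_or_gt 0 z with hz0 | hz0
    · obtain ⟨k, rfl⟩ := Int.eq_ofNat_of_zero_le hz0
      have : t + ((k:ℤ):ℝ) * T = t + (k:ℝ) * T := by push_cast; ring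
      rw [this, key t ht k, hxt]
    · obtain ⟨k, hk⟩ : ∃ k : ℕ, (-z : ℤ) = k :=
        ⟨(-z).toNat, (Int.toNat_of_nonneg (by omega)).symm⟩
      have hk' : -(z:ℝ) = (k:ℝ) := by exact_mod_cast congrArg (Int.cast : ℤ → ℝ) hk
      have h4 := key (t + (z:ℝ) * T) hz k
      have h5 : t + (z:ℝ) * T + (k:ℝ) * T = t := by linear_combination -T * hk'
      rw [h5] at h4
      exact h4.symm.trans hxt
  · intro h
    have hne : (Finset.univ : Finset (Fin n → Bool)).Nonempty :=
      ⟨fun _ => false, Finset.mem_univ _⟩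
    set f : (Fin n → Bool) → ℝ := fun μ =>
      if hb : BddAbove {t : ℝ | x t = μ} then hb.choose else 0 with hf
    set g : (Fin n → Bool) → ℝ := fun μ =>
      if hμ : μ ∈ omegaR x then (h μ hμ).choose else 0 with hg
    have hgspec : ∀ μ (hμ : μ ∈ omegaR x), EvPerR x μ T (g μ) := by
      intro μ hμ
      simp only [hg, dif_pos hμ]
      exact (h μ hμ).choose_spec
    set t₀ : ℝ := (Finset.univ.sup' hne (fun μ => max (f μ) (g μ))) + 1 with ht₀
    refine ⟨t₀, fun t ht => ?_⟩
    have hsup : max (f (x t)) (g (x t)) ≤ t₀ - 1 := by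
      rw [ht₀]
      simp only [add_sub_cancel_right]
      exact Finset.le_sup' (fun μ => max (f μ) (g μ)) (Finset.mem_univ (x t))
    have hmem : x t ∈ omegaR x := by
      by_contra hb
      simp only [omegaR, Set.mem_setOf_eq, not_not] at hb
      have hub : t ≤ f (x t) := by
        have : f (x t) ∈ upperBounds {s : ℝ | x s = x t} := by
          simp only [hf, dif_pos hb]
          exact hb.choose_spec
        exact this rfl
      have : f (x t) ≤ t₀ - 1 := le_trans (le_max_left _ _) hsup
      linarith
    have hgt : g (x t) ≤ t := by
      have : g (x t) ≤ t₀ - 1 := le_trans (le_max_right _ _) hsup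
      linarith
    have := hgspec (x t) hmem t hgt rfl 1 (by push_cast; linarith)
    have h1 : t + ((1:ℤ):ℝ) * T = t + T := by push_cast; ring
    rw [h1] at this
    exact this.symm
end

section
/- (a) Let x̂ be a discrete-time signal with P̂^x̂ ≠ ∅. Then there exists an integer p̃ ≥ 1 such that P̂^x̂ = {p̃, 2p̃, 3p̃, …}, the set of positive integer multiples of p̃. (b) Let x be a real-time signal that is not eventually constant and suppose P^x ≠ ∅. Then there exists T̃ > 0 such that P^x = {T̃, 2T̃, 3T̃, …}, the set of positive integer multiples of T̃. -/
open Set Filter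

/-- The set of periods of a discrete-time signal. -/
def PsigD {n : ℕ} (xd : ℤ → Fin n → Bool) : Set ℤ :=
  {p | 1 ≤ p ∧ ∃ k' : ℤ, -1 ≤ k' ∧ ∀ k : ℤ, k' ≤ k → xd k = xd (k + p)}

/-- The set of periods of a real-time signal. -/
def PsigR {n : ℕ} (x : ℝ → Fin n → Bool) : Set ℝ :=
  {T | 0 < T ∧ ∃ t' : ℝ, ∀ t : ℝ, t' ≤ t → x t = x (t + T)}

lemma psigD_add {n : ℕ} {xd : ℤ → Fin n → Bool} {p q : ℤ}
    (hp : p ∈ PsigD xd) (hq : q ∈ PsigD xd) : p + q ∈ PsigD xd := by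
  obtain ⟨hp1, k₁, hk₁, hk₁'⟩ := hp
  obtain ⟨hq1, k₂, hk₂, hk₂'⟩ := hq
  refine ⟨by omega, max k₁ k₂, by omega, fun k hk => ?_⟩
  have h1 := hk₁' k (by omega)
  have h2 := hk₂' (k + p) (by omega)
  rw [h1, h2, add_assoc]

lemma psigD_diff {n : ℕ} {xd : ℤ → Fin n → Bool} {p q : ℤ}
    (hp : p ∈ PsigD xd) (hq : q ∈ PsigD xd) (h : q < p) : p - q ∈ PsigD xd := by
  obtain ⟨hp1, k₁, hk₁, hk₁'⟩ := hp
  obtain ⟨hq1, k₂, hk₂, hk₂'⟩ := hq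
  refine ⟨by omega, max k₁ (max (-1) (k₂ - (p - q))), by omega, fun k hk => ?_⟩
  have h1 := hk₁' k (by omega)
  have h2 := hk₂' (k + (p - q)) (by omega)
  have h3 : k + (p - q) + q = k + p := by ring
  rw [h1, h2, h3]

lemma partA {n : ℕ} (xd : ℤ → Fin n → Bool) (hne : (PsigD xd).Nonempty) :
    ∃ pt : ℤ, 1 ≤ pt ∧ PsigD xd = {q : ℤ | ∃ m : ℕ, 1 ≤ m ∧ q = (m : ℤ) * pt} := by
  obtain ⟨p₀, hp₀⟩ := hne
  have hp₀1 : 1 ≤ p₀ := hp₀.1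
  set S : Set ℕ := {m | (m : ℤ) ∈ PsigD xd} with hSdef
  have hS : S.Nonempty := ⟨p₀.toNat, by
    show ((p₀.toNat : ℤ)) ∈ PsigD xd
    rwa [Int.toNat_of_nonneg (by omega)]⟩
  set pt : ℕ := sInf S with hptdef
  have hptS : pt ∈ S := Nat.sInf_mem hS
  have hptP : (pt : ℤ) ∈ PsigD xd := hptS
  have hpt1 : 1 ≤ (pt : ℤ) := hptP.1
  have hmin : ∀ q ∈ PsigD xd, (pt : ℤ) ≤ q := by
    intro q hq
    have hq1 : 1 ≤ q := hq.1
    have : q.toNat ∈ S := by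
      show ((q.toNat : ℤ)) ∈ PsigD xd
      rwa [Int.toNat_of_nonneg (by omega)]
    have := Nat.sInf_le this
    omega
  -- multiples are periods
  have hmul : ∀ m : ℕ, 1 ≤ m → ((m : ℤ) * pt) ∈ PsigD xd := by
    intro m hm
    induction m with
    | zero => omega
    | succ m ih =>
      rcases Nat.eq_zero_or_pos m with h | h
      · subst h; simpa using hptP
      · have h2 := psigD_add (ih h) hptP
        have he : ((m + 1 : ℕ) : ℤ) * pt = (m : ℤ) * pt + pt := by push_cast; ring
        rw [he]
        exact h2
  -- every period is a multiple
  have hdiv : ∀ N : ℕ, ∀ q ∈ PsigD xd, q ≤ (N : ℤ) → ∃ m : ℕ, 1 ≤ m ∧ q = (m : ℤ) * pt := by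
    intro N
    induction N with
    | zero => intro q hq hqN; have := hq.1; omega
    | succ N ih =>
      intro q hq hqN
      have hle := hmin q hq
      rcases eq_or_lt_of_le hle with h | h
      · exact ⟨1, le_refl 1, by rw [Nat.cast_one, one_mul]; omega⟩
      · have hd : q - pt ∈ PsigD xd := psigD_diff hq hptP h
        obtain ⟨m, hm1, hm2⟩ := ih (q - pt) hd (by push_cast; omega)
        refine ⟨m + 1, by omega, ?_⟩
        push_cast
        linear_combination hm2
  refine ⟨(pt : ℤ), hpt1, Set.ext fun q => ⟨fun hq => ?_, fun hq => ?_⟩⟩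
  · exact hdiv q.toNat q hq (by omega)
  · obtain ⟨m, hm1, hm2⟩ := hq
    rw [hm2]; exact hmul m hm1

lemma partB {n : ℕ} (x : ℝ → Fin n → Bool) (hsig : IsSignal x)
    (hnc : ¬ (∃ (μ : Fin n → Bool) (t' : ℝ), ∀ t : ℝ, t' ≤ t → x t = μ))
    (hne : (PsigR x).Nonempty) :
    ∃ Tt : ℝ, 0 < Tt ∧ PsigR x = {T : ℝ | ∃ m : ℕ, 1 ≤ m ∧ T = (m : ℝ) * Tt} := by
  classical
  obtain ⟨μ₀, t, htm, htt, h0, hstep⟩ := hsig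
  obtain ⟨T₀, hT₀pos, c, hc⟩ := hne
  -- iterating a period
  have iter : ∀ (d T : ℝ), 0 ≤ T → (∀ s, d ≤ s → x s = x (s + T)) →
      ∀ m : ℕ, ∀ s, d ≤ s → x s = x (s + m * T) := by
    intro d T hT0 hT m
    induction m with
    | zero => intro s hs; norm_num
    | succ m ih =>
      intro s hs
      have hmt : (0:ℝ) ≤ (m:ℝ) * T := mul_nonneg (Nat.cast_nonneg m) hT0
      have h1 := ih s hs
      have h2 := hT (s + m * T) (by linarith)
      have h3 : s + (m:ℝ) * T + T = s + ((m+1 : ℕ) : ℝ) * T := by push_cast; ring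
      rw [h1, h2, h3]
  -- every period works from the common limit `c` on
  have hcommon : ∀ T ∈ PsigR x, ∀ s, c ≤ s → x s = x (s + T) := by
    intro T hT s hs
    obtain ⟨hTpos, t₁, h₁⟩ := hT
    obtain ⟨m, hm⟩ := exists_nat_ge ((t₁ - s) / T₀)
    have hm' : t₁ ≤ s + m * T₀ := by
      rw [div_le_iff₀ hT₀pos] at hm; linarith
    have h1 := iter c T₀ hT₀pos.le hc m s hs
    have h2 := h₁ (s + m * T₀) hm'
    have h3 := iter c T₀ hT₀pos.le hc m (s + T) (by linarith)
    have h4 : s + (m:ℝ) * T₀ + T = s + T + (m:ℝ) * T₀ := by ring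
    rw [h1, h2, h4, ← h3]
  set Q : Set ℝ := {T | 0 < T ∧ ∀ s, c ≤ s → x s = x (s + T)} with hQdef
  have hQP : PsigR x = Q := by
    ext T
    constructor
    · intro hT; exact ⟨hT.1, hcommon T hT⟩
    · intro hT; exact ⟨hT.1, c, hT.2⟩
  have hT₀Q : T₀ ∈ Q := ⟨hT₀pos, hc⟩
  -- every point beyond t 0 lies in some switching interval
  have hexk : ∀ s : ℝ, t 0 ≤ s → ∃ k : ℕ, t k ≤ s ∧ s < t (k+1) := by
    intro s hs
    have hgt : ∃ k, s < t k := (htt.eventually (eventually_gt_atTop s)).exists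
    have hk₀ : s < t (Nat.find hgt) := Nat.find_spec hgt
    have hk₀pos : Nat.find hgt ≠ 0 := by
      intro h; rw [h] at hk₀; linarith
    obtain ⟨k, hk⟩ := Nat.exists_eq_succ_of_ne_zero hk₀pos
    refine ⟨k, ?_, by rw [hk] at hk₀; exact hk₀⟩
    by_contra hcon
    push_neg at hcon
    exact Nat.find_min hgt (by omega) hcon
  -- there is a jump beyond c
  have hjump : ∃ j : ℕ, c ≤ t j ∧ x (t j) ≠ x (t (j+1)) := by
    by_contra hcon
    push_neg at hcon
    obtain ⟨j₀, hj₀⟩ := (htt.eventually (eventually_ge_atTop (max c (t 0)))).exists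
    have hj₀c : c ≤ t j₀ := le_trans (le_max_left _ _) hj₀
    have hj₀0 : t 0 ≤ t j₀ := le_trans (le_max_right _ _) hj₀
    have hconst : ∀ j, j₀ ≤ j → x (t j) = x (t j₀) := by
      intro j hj
      induction j, hj using Nat.le_induction with
      | base => rfl
      | succ j hj ih =>
        have hcj : c ≤ t j := le_trans hj₀c (htm.monotone hj)
        rw [← hcon j hcj, ih]
    refine hnc ⟨x (t j₀), t j₀, fun s hs => ?_⟩
    obtain ⟨k, hk1, hk2⟩ := hexk s (le_trans hj₀0 hs)
    have hkj : j₀ ≤ k := by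
      by_contra hlt
      push_neg at hlt
      have : t (k+1) ≤ t j₀ := htm.monotone hlt
      linarith
    rw [hstep k s hk1 hk2, hconst k hkj]
  obtain ⟨j, hjc, hjne⟩ := hjump
  have hδpos : 0 < t (j+1) - t j := by
    have := htm (Nat.lt_succ_self j); linarith
  -- every period is at least the length of the jump interval
  have hlb : ∀ T ∈ Q, t (j+1) - t j ≤ T := by
    intro T hT
    by_contra hlt
    push_neg at hlt
    have hTpos := hT.1
    have h1 : x (t (j+1) - T) = x (t j) :=
      hstep j _ (by linarith) (by linarith)
    have h2 := hT.2 (t (j+1) - T) (by linarith)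
    have h3 : t (j+1) - T + T = t (j+1) := by ring
    rw [h3] at h2
    exact hjne (by rw [← h1, h2])
  have hQne : Q.Nonempty := ⟨T₀, hT₀Q⟩
  have hbdd : BddBelow Q := ⟨t (j+1) - t j, fun T hT => hlb T hT⟩
  have hιδ : t (j+1) - t j ≤ sInf Q := le_csInf hQne hlb
  have hιpos : 0 < sInf Q := lt_of_lt_of_le hδpos hιδ
  obtain ⟨Tt, hTtQ, hTtlt⟩ := Real.lt_sInf_add_pos hQne hιpos
  have hTtpos : 0 < Tt := hTtQ.1
  -- Tt is a minimum of Q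
  have hmin : ∀ T ∈ Q, Tt ≤ T := by
    intro T hT
    by_contra hlt
    push_neg at hlt
    have hd : Tt - T ∈ Q := by
      refine ⟨by linarith, fun s hs => ?_⟩
      have h1 := hT.2 (s + (Tt - T)) (by linarith [hT.1])
      have h2 := hTtQ.2 s hs
      have h3 : s + (Tt - T) + T = s + Tt := by ring
      rw [h3] at h1
      rw [h2]
      exact h1.symm
    have i1 := csInf_le hbdd hT
    have i2 := csInf_le hbdd hd
    linarith
  -- multiples of Tt are periods
  have hmulQ : ∀ m : ℕ, 1 ≤ m → ((m : ℝ) * Tt) ∈ Q := by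
    intro m hm
    refine ⟨mul_pos (by exact_mod_cast hm) hTtpos, fun s hs => ?_⟩
    exact iter c Tt hTtpos.le hTtQ.2 m s hs
  -- every period is a multiple of Tt
  have hdiv : ∀ N : ℕ, ∀ T ∈ Q, T ≤ (N : ℝ) * Tt → ∃ m : ℕ, 1 ≤ m ∧ T = (m:ℝ) * Tt := by
    intro N
    induction N with
    | zero =>
      intro T hT hle
      simp at hle
      linarith [hT.1]
    | succ N ih =>
      intro T hT hle
      rcases eq_or_lt_of_le (hmin T hT) with h | h
      · exact ⟨1, le_refl 1, by rw [Nat.cast_one, one_mul, h]⟩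
      · have hd : T - Tt ∈ Q := by
          refine ⟨by linarith, fun s hs => ?_⟩
          have h1 := hT.2 s hs
          have h2 := hTtQ.2 (s + (T - Tt)) (by linarith)
          have h3 : s + (T - Tt) + Tt = s + T := by ring
          rw [h3] at h2
          rw [h1]
          exact h2.symm
        have hcast : ((N+1 : ℕ) : ℝ) * Tt = (N:ℝ) * Tt + Tt := by push_cast; ring
        obtain ⟨m, hm1, hm2⟩ := ih (T - Tt) hd (by rw [hcast] at hle; linarith)
        refine ⟨m + 1, by omega, ?_⟩
        push_cast
        linear_combination hm2
  refine ⟨Tt, hTtpos, ?_⟩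
  rw [hQP]
  ext T
  constructor
  · intro hT
    obtain ⟨N, hN⟩ := exists_nat_ge (T / Tt)
    exact hdiv N T hT (by rw [div_le_iff₀ hTtpos] at hN; linarith)
  · rintro ⟨m, hm1, rfl⟩
    exact hmulQ m hm1

/-- (a) The nonempty set of periods of an eventually periodic discrete-time signal is the
set of positive multiples of a prime period; (b) likewise in real time, provided the
signal is not eventually constant. -/
theorem set_of_periods_of_signal {n : ℕ} :
    (∀ xd : ℤ → Fin n → Bool, (PsigD xd).Nonempty →
      ∃ pt : ℤ, 1 ≤ pt ∧ PsigD xd = {q : ℤ | ∃ m : ℕ, 1 ≤ m ∧ q = (m : ℤ) * pt}) ∧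
    (∀ x : ℝ → Fin n → Bool, IsSignal x →
      ¬ (∃ (μ : Fin n → Bool) (t' : ℝ), ∀ t : ℝ, t' ≤ t → x t = μ) →
      (PsigR x).Nonempty →
        ∃ Tt : ℝ, 0 < Tt ∧ PsigR x = {T : ℝ | ∃ m : ℕ, 1 ≤ m ∧ T = (m : ℝ) * Tt}) := by
  exact ⟨fun xd hne => partA xd hne, fun x h1 h2 h3 => partB x h1 h2 h3⟩
end

section
/- Let x̂ be a discrete-time signal that is not eventually constant, suppose every μ ∈ ω̂(x̂) is eventually periodic (P̂_μ^x̂ ≠ ∅), and suppose P̂^x̂ ≠ ∅. Let p̃ be the least element of P̂^x̂ and, for each μ ∈ ω̂(x̂), let p̃_μ be the least element of P̂_μ^x̂. Then for each μ ∈ ω̂(x̂) there is an integer n_μ ≥ 1 with p̃ = n_μ · p̃_μ, and the family (n_μ)_{μ ∈ ω̂(x̂)} is relatively prime (has greatest common divisor 1); equivalently, p̃ is the least common multiple of the numbers p̃_μ, μ ∈ ω̂(x̂). -/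
open Set Filter

/-- Iterating a one-step eventual period. -/
lemma aux_iter {n : ℕ} (xd : ℤ → Fin n → Bool) (p k' : ℤ) (hp : 1 ≤ p)
    (h : ∀ k : ℤ, k' ≤ k → xd k = xd (k + p)) :
    ∀ (k z : ℤ), k' ≤ k → k' ≤ k + z * p → xd k = xd (k + z * p) := by
  have hnat : ∀ (m : ℕ) (k : ℤ), k' ≤ k → xd k = xd (k + (m : ℤ) * p) := by
    intro m
    induction m with
    | zero => intro k hk; simp
    | succ m ih =>
      intro k hk
      have h1 : xd k = xd (k + (m : ℤ) * p) := ih k hk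
      have h2 : k' ≤ k + (m : ℤ) * p := by nlinarith [Int.natCast_nonneg m]
      have h3 := h (k + (m : ℤ) * p) h2
      rw [h1, h3]
      congr 1
      push_cast
      ring
  intro k z hk hkz
  rcases le_or_gt 0 z with hz | hz
  · obtain ⟨m, rfl⟩ := Int.eq_ofNat_of_zero_le hz
    exact hnat m k hk
  · have hm : ((-z).toNat : ℤ) = -z := Int.toNat_of_nonneg (by omega)
    have := hnat (-z).toNat (k + z * p) hkz
    rw [hm] at this
    have heq : k + z * p + -z * p = k := by ring
    rw [heq] at this
    exact this.symm

/-- The prime period of a not eventually constant, eventually periodic discrete-time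
signal is the least common multiple of the prime periods of its omega limit points:
it is `nμ μ` times the prime period of `μ`, the factors `nμ μ` being relatively prime. -/
theorem prime_period_is_lcm {n : ℕ} (xd : ℤ → Fin n → Bool)
    (hnc : ¬ ∃ (μ : Fin n → Bool) (k' : ℤ), -1 ≤ k' ∧ ∀ k : ℤ, k' ≤ k → xd k = μ)
    (hper : ∀ μ ∈ omegaD xd, (PsetD xd μ).Nonempty)
    (hP : (PsigD xd).Nonempty)
    (pt : ℤ) (hpt : IsLeast (PsigD xd) pt)
    (pμ : (Fin n → Bool) → ℤ) (hpμ : ∀ μ ∈ omegaD xd, IsLeast (PsetD xd μ) (pμ μ)) :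
    ∃ nμ : (Fin n → Bool) → ℤ,
      (∀ μ ∈ omegaD xd, 1 ≤ nμ μ ∧ pt = nμ μ * pμ μ) ∧
      ∀ d : ℤ, 0 < d → (∀ μ ∈ omegaD xd, d ∣ nμ μ) → d = 1 := by
  obtain ⟨⟨hpt1, k'g, hk'g, hgper⟩, hptlb⟩ := hpt
  have hiter := aux_iter xd pt k'g hpt1 hgper
  -- all values at large times are omega limit points
  have hinω : ∀ k : ℤ, -1 ≤ k → k'g ≤ k → xd k ∈ omegaD xd := by
    intro k hk1 hkg
    have hinj : Function.Injective (fun m : ℕ => k + (m : ℤ) * pt) := by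
      intro a b hab
      simp only at hab
      have : (a : ℤ) * pt = (b : ℤ) * pt := by omega
      have : (a : ℤ) = b := mul_right_cancel₀ (by omega) this
      exact_mod_cast this
    exact Set.infinite_of_injective_forall_mem hinj (fun m => by
      refine ⟨by nlinarith [Int.natCast_nonneg m], ?_⟩
      exact (hiter k m hkg (by nlinarith [Int.natCast_nonneg m])).symm)
  -- main divisibility claim
  have key : ∀ μ ∈ omegaD xd, 1 ≤ pt / pμ μ ∧ pt = (pt / pμ μ) * pμ μ := by
    intro μ hμ
    obtain ⟨⟨hpμ1, k'μ, hk'μ, hEv⟩, hlb⟩ := hpμ μ hμ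
    set K := max k'g k'μ with hK
    have hKg : k'g ≤ K := le_max_left _ _
    have hKμ : k'μ ≤ K := le_max_right _ _
    have hKm1 : -1 ≤ K := le_trans hk'g hKg
    -- pt is a period of μ
    have hptP : pt ∈ PsetD xd μ := by
      refine ⟨hpt1, K, hKm1, fun k hk hkμ z hz => ?_⟩
      rw [← hiter k z (le_trans hKg hk) (le_trans hKg hz)]
      exact hkμ
    have hle : pμ μ ≤ pt := hlb hptP
    set q := pt / pμ μ with hq
    set r := pt % pμ μ with hr
    have hpμpos : 0 < pμ μ := by omega
    have hr0 : 0 ≤ r := Int.emod_nonneg pt (by omega)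
    have hrlt : r < pμ μ := Int.emod_lt_of_pos pt hpμpos
    have heq : pμ μ * q + r = pt := Int.mul_ediv_add_emod pt (pμ μ)
    have hrz : r = 0 := by
      by_contra hrne
      have hr1 : 1 ≤ r := by omega
      have hrP : r ∈ PsetD xd μ := by
        refine ⟨hr1, K, hKm1, fun k hk hkμ z hz => ?_⟩
        set m : ℤ := ((K - k - z * pt).toNat : ℤ) with hm
        have hm0 : 0 ≤ m := by rw [hm]; exact Int.natCast_nonneg _
        have hmge : K - k - z * pt ≤ m := Int.self_le_toNat _
        have hmpt : m ≤ m * pt := le_mul_of_one_le_right hm0 hpt1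
        have ha : K ≤ k + (z + m) * pt := by nlinarith
        have hxa : xd (k + (z + m) * pt) = μ := by
          rw [← hiter k (z + m) (le_trans hKg hk) (le_trans hKg ha)]
          exact hkμ
        have hbeq : k + (z + m) * pt + (-(z * q)) * pμ μ = (k + z * r) + m * pt := by
          rw [← heq]; ring
        have hb := hEv (k + (z + m) * pt) (le_trans hKμ ha) hxa (-(z * q)) (by
          rw [hbeq]
          have : 0 ≤ m * pt := by nlinarith
          omega)
        rw [hbeq] at hb
        rw [hiter (k + z * r) m (le_trans hKg hz) (by
          have : 0 ≤ m * pt := by nlinarith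
          have := le_trans hKg hz
          omega)]
        exact hb
      have := hlb hrP
      linarith
    have hpteq : pt = q * pμ μ := by linear_combination hrz - heq
    have hq1 : 1 ≤ q := by nlinarith
    exact ⟨hq1, hpteq⟩
  refine ⟨fun μ => pt / pμ μ, key, ?_⟩
  -- relative primality
  intro d hd hdvd
  -- nonemptiness of omega: the value at max k'g (-1)
  have hμ0 : xd (max k'g (-1)) ∈ omegaD xd := hinω _ (le_max_right _ _) (le_max_left _ _)
  obtain ⟨c0, hc0⟩ := hdvd _ hμ0
  replace hc0 : pt / pμ (xd (max k'g (-1))) = d * c0 := hc0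
  obtain ⟨hn0, hpt0⟩ := key _ hμ0
  set s : ℤ := c0 * pμ (xd (max k'g (-1))) with hs
  have hpts : pt = d * s := by rw [hs]; rw [hpt0, hc0]; ring
  have hs1 : 1 ≤ s := by nlinarith
  -- choose eventual-periodicity start times for each μ
  classical
  set kf : (Fin n → Bool) → ℤ := fun μ =>
    if h : μ ∈ omegaD xd then ((hpμ μ h).1.2).choose else -1 with hkf
  have hkfspec : ∀ μ (h : μ ∈ omegaD xd), EvPerD xd μ (pμ μ) (kf μ) := by
    intro μ h
    simp only [hkf, dif_pos h]
    exact ((hpμ μ h).1.2).choose_spec.2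
  set K : ℤ := max k'g ((Finset.univ.sup (fun μ : Fin n → Bool => (kf μ).toNat) : ℕ) : ℤ)
    with hKdef
  have hKg : k'g ≤ K := le_max_left _ _
  have hKkf : ∀ μ : Fin n → Bool, kf μ ≤ K := by
    intro μ
    have h1 : kf μ ≤ ((kf μ).toNat : ℤ) := Int.self_le_toNat _
    have h2 : (kf μ).toNat ≤ Finset.univ.sup (fun μ : Fin n → Bool => (kf μ).toNat) :=
      Finset.le_sup (f := fun μ => (kf μ).toNat) (Finset.mem_univ μ)
    calc kf μ ≤ _ := h1
      _ ≤ _ := le_trans (by exact_mod_cast h2) (le_max_right _ _)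
  -- s is a period of the signal
  have hsP : s ∈ PsigD xd := by
    refine ⟨hs1, K, le_trans hk'g hKg, fun k hk => ?_⟩
    have hμω : xd k ∈ omegaD xd := hinω k (by omega) (le_trans hKg hk)
    obtain ⟨c, hc⟩ := hdvd _ hμω
    replace hc : pt / pμ (xd k) = d * c := hc
    obtain ⟨hn1, hpteq⟩ := key _ hμω
    have hc1 : 1 ≤ c := by nlinarith
    have hsc : s = c * pμ (xd k) := by
      have h1 : d * s = d * (c * pμ (xd k)) := by
        rw [← hpts, hpteq, hc]; ring
      exact mul_left_cancel₀ (by omega) h1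
    have hpμ1 : 1 ≤ pμ (xd k) := ((hpμ _ hμω).1).1
    have := hkfspec _ hμω k (le_trans (hKkf _) hk) rfl c (by nlinarith [hKkf (xd k)])
    rw [hsc]
    exact this.symm
  have hle := hptlb hsP
  nlinarith
end

section
/- Let x be a real-time signal which is not a constant function, let μ ∈ Or(x), T > 0 and t' ∈ I^x, and suppose μ satisfies the eventual periodicity condition for x with period T and limit t'. Then there exist t₀' < t₀ such that I^x ∩ L_μ^x = [t₀', t₀); that is, for every t'' ∈ ℝ, (t'' ∈ I^x and t'' ∈ L_μ^x) if and only if t₀' ≤ t'' < t₀. -/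
open Set Filter

/-- For a non-constant signal `x` (with initial value `μ₀`) and a periodic point
`μ ∈ Or(x)` — i.e. `μ` is eventually periodic with a limit of periodicity that is also an
initial time instant of `x` — the set of initial time instants of `x` that are limits of
periodicity of `μ` is a half-open interval `[t₀', t₀)`. -/
theorem initial_time_limits_of_periodicity {n : ℕ}
    (x : ℝ → Fin n → Bool) (μ₀ : Fin n → Bool) (ts : ℕ → ℝ)
    (hmono : StrictMono ts) (htop : Tendsto ts atTop atTop)
    (hinit : ∀ s, s < ts 0 → x s = μ₀)
    (hstep : ∀ k : ℕ, ∀ s, ts k ≤ s → s < ts (k + 1) → x s = x (ts k))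
    (hnc : ¬ ∀ t s : ℝ, x t = x s)
    (μ : Fin n → Bool) (hμ : μ ∈ Set.range x) (T t' : ℝ) (hT : 0 < T)
    (ht' : ∀ t : ℝ, t ≤ t' → x t = μ₀)
    (hper : EvPerR x μ T t') :
    ∃ t₀' t₀ : ℝ, t₀' < t₀ ∧
      {t'' : ℝ | ∀ t : ℝ, t ≤ t'' → x t = μ₀} ∩ Lset x μ = Set.Ico t₀' t₀ := by
  classical
  -- locate a point within the step structure
  have hlocate : ∀ s : ℝ, ts 0 ≤ s → ∃ k, ts k ≤ s ∧ s < ts (k + 1) := by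
    intro s hs
    by_contra h
    push_neg at h
    have hall : ∀ k, ts k ≤ s := by
      intro k
      induction k with
      | zero => exact hs
      | succ k ih => exact h k ih
    obtain ⟨N, hN⟩ := (htop.eventually_gt_atTop s).exists
    exact absurd (hall N) (not_le.mpr hN)
  -- right constancy
  have hrc : ∀ s : ℝ, ∃ ε > 0, ∀ u, s ≤ u → u < s + ε → x u = x s := by
    intro s
    rcases lt_or_ge s (ts 0) with h | h
    · refine ⟨ts 0 - s, by linarith, fun u hsu hu => ?_⟩
      rw [hinit u (by linarith), hinit s h]
    · obtain ⟨k, hk1, hk2⟩ := hlocate s h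
      refine ⟨ts (k + 1) - s, by linarith, fun u hsu hu => ?_⟩
      rw [hstep k u (le_trans hk1 hsu) (by linarith), hstep k s hk1 hk2]
  -- existence of a point with value ≠ μ₀
  have hrne : ∃ r, x r ≠ μ₀ := by
    by_contra h
    push_neg at h
    exact hnc (fun t s => by rw [h t, h s])
  have hKne : ∃ k, x (ts k) ≠ μ₀ := by
    obtain ⟨r, hr⟩ := hrne
    have hr0 : ts 0 ≤ r := by
      by_contra h
      exact hr (hinit r (lt_of_not_ge h))
    obtain ⟨k, hk1, hk2⟩ := hlocate r hr0
    exact ⟨k, by rw [← hstep k r hk1 hk2]; exact hr⟩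
  set k₀ := Nat.find hKne with hk₀def
  set t₀ := ts k₀ with ht₀def
  have hxt₀ : x t₀ ≠ μ₀ := Nat.find_spec hKne
  have hbelow : ∀ t, t < t₀ → x t = μ₀ := by
    intro t ht
    rcases lt_or_ge t (ts 0) with h | h
    · exact hinit t h
    · obtain ⟨k, hk1, hk2⟩ := hlocate t h
      have hkk : k < k₀ := by
        have h2 : ts k < ts k₀ := lt_of_le_of_lt hk1 ht
        exact hmono.lt_iff_lt.mp h2
      have h3 := Nat.find_min hKne hkk
      rw [hstep k t hk1 hk2]
      exact not_not.mp h3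
  have ht'lt : t' < t₀ := by
    by_contra h
    exact hxt₀ (ht' t₀ (le_of_not_gt h))
  -- self-bound: a limit of periodicity below t₀ with period T' is above t₀ - T'
  have hself : ∀ c T', 0 < T' → EvPerR x μ T' c → c < t₀ → t₀ - T' < c := by
    intro c T' hT' hc hct₀
    by_contra h
    push_neg at h
    by_cases hμeq : μ = μ₀
    · have h1 : x (t₀ - T') = μ := by rw [hbelow _ (by linarith), hμeq]
      have h2 := hc (t₀ - T') (by linarith) h1 1 (by push_cast; linarith)
      rw [show t₀ - T' + ((1 : ℤ) : ℝ) * T' = t₀ by push_cast; ring] at h2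
      exact hxt₀ (h2.trans hμeq)
    · obtain ⟨r, hr⟩ := hμ
      have hrt₀ : t₀ ≤ r := by
        by_contra hh
        exact hμeq (hr.symm.trans (hbelow r (lt_of_not_ge hh)))
      set y := (r - t₀) / T' with hydef
      have hyy : r - t₀ = y * T' := by
        rw [hydef]; field_simp
      have hy1 : (⌊y⌋ : ℝ) * T' ≤ r - t₀ := by
        have h1 : (⌊y⌋ : ℝ) ≤ y := Int.floor_le y
        nlinarith
      have hy2 : r - t₀ < ((⌊y⌋ : ℝ) + 1) * T' := by
        have h1 : y < (⌊y⌋ : ℝ) + 1 := Int.lt_floor_add_one y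
        nlinarith
      have hkey := hc r (by linarith) hr (-(⌊y⌋ + 1)) (by push_cast; linarith)
      push_cast at hkey
      have hlt : r + -((⌊y⌋ : ℝ) + 1) * T' < t₀ := by linarith
      have hval := hbelow _ hlt
      exact hμeq (hkey.symm.trans hval)
  -- the candidate left endpoint
  set P : Set ℝ := {s | EvPerR x μ T s} with hPdef
  have ht'P : t' ∈ P := hper
  have hPbdd : BddBelow P := by
    refine ⟨t₀ - T, fun c hc => ?_⟩
    rcases lt_or_ge c t₀ with h | h
    · exact le_of_lt (hself c T hT hc h)
    · linarith
  set β := sInf P with hβdef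
  have hβle : β ≤ t' := csInf_le hPbdd ht'P
  have hβt₀ : β < t₀ := lt_of_le_of_lt hβle ht'lt
  -- β is itself a limit of periodicity with period T
  have hβmem : EvPerR x μ T β := by
    intro t htβ hxt z hzβ
    obtain ⟨ε₁, hε₁, hc₁⟩ := hrc t
    obtain ⟨ε₂, hε₂, hc₂⟩ := hrc (t + z * T)
    set δ := min ε₁ ε₂ / 2 with hδdef
    have hmin : 0 < min ε₁ ε₂ := lt_min hε₁ hε₂
    have hδ : 0 < δ := by rw [hδdef]; linarith
    have hδ1 : δ < ε₁ := by
      have h1 := min_le_left ε₁ ε₂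
      rw [hδdef]; linarith
    have hδ2 : δ < ε₂ := by
      have h1 := min_le_right ε₁ ε₂
      rw [hδdef]; linarith
    have hw : β < min (t + δ) (t + z * T + δ) :=
      lt_min_iff.mpr ⟨by linarith, by linarith⟩
    obtain ⟨p, hp, hpw⟩ := exists_lt_of_csInf_lt ⟨t', ht'P⟩ hw
    have h1 : x (t + δ) = μ := by
      rw [hc₁ (t + δ) (by linarith) (by linarith)]; exact hxt
    have hp1 : p ≤ t + δ := le_of_lt (lt_of_lt_of_le hpw (min_le_left _ _))
    have hp2 : p ≤ t + δ + z * T := by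
      have h2 := lt_of_lt_of_le hpw (min_le_right (t + δ) (t + z * T + δ))
      linarith
    have h2 := hp (t + δ) hp1 h1 z hp2
    have h3 : x (t + z * T + δ) = μ := by
      rw [show t + (z : ℝ) * T + δ = t + δ + (z : ℝ) * T by ring]; exact h2
    have h4 := hc₂ (t + z * T + δ) (by linarith) (by linarith)
    rw [← h4]; exact h3
  -- Lset is upward closed
  have hLup : ∀ a c, a ∈ Lset x μ → a ≤ c → c ∈ Lset x μ := by
    rintro a c ⟨T', hT', ha⟩ hac
    exact ⟨T', hT', fun t ht hxt z hz => ha t (hac.trans ht) hxt z (hac.trans hz)⟩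
  -- no limit of periodicity of μ lies strictly below β
  have hchain : ∀ c, c ∈ Lset x μ → c < β → False := by
    intro c hcL hcβ
    have hcP : ¬ EvPerR x μ T c := fun h => absurd (csInf_le hPbdd h) (not_le.mpr hcβ)
    unfold EvPerR at hcP
    push_neg at hcP
    obtain ⟨t, htc, hxt, z, hzc, hxv⟩ := hcP
    by_cases hμeq : μ = μ₀
    · -- here t + z*T ≥ t₀ and t < β
      have hvt₀ : t₀ ≤ t + z * T := by
        by_contra h
        exact hxv (by rw [hbelow _ (lt_of_not_ge h), hμeq])
      have htβ : t < β := by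
        by_contra h
        exact hxv (hβmem t (le_of_not_gt h) hxt z (by linarith))
      obtain ⟨Tt, hTt, ht2⟩ := hLup c t hcL htc
      have hsb : t₀ - Tt < t := hself t Tt hTt ht2 (htβ.trans hβt₀)
      have h1 : x (t + Tt) = μ := by
        have h0 := ht2 t le_rfl hxt 1 (by push_cast; linarith)
        rwa [show t + ((1 : ℤ) : ℝ) * Tt = t + Tt by push_cast; ring] at h0
      have h2 : x (t + z * T + Tt) = μ := by
        have h0 := hβmem (t + Tt) (by linarith) h1 z (by linarith)
        rwa [show t + Tt + (z : ℝ) * T = t + (z : ℝ) * T + Tt by ring] at h0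
      have h3 : x (t + z * T) = μ := by
        have h0 := ht2 (t + z * T + Tt) (by linarith) h2 (-1) (by push_cast; linarith)
        rwa [show t + (z : ℝ) * T + Tt + ((-1 : ℤ) : ℝ) * Tt = t + (z : ℝ) * T by
          push_cast; ring] at h0
      exact hxv h3
    · -- here t ≥ t₀ and t + z*T < β
      have htt₀ : t₀ ≤ t := by
        by_contra h
        exact hμeq (hxt.symm.trans (hbelow t (lt_of_not_ge h)))
      have hvβ : t + z * T < β := by
        by_contra h
        exact hxv (hβmem t (by linarith) hxt z (le_of_not_gt h))
      have hvt₀ : t + z * T < t₀ := hvβ.trans hβt₀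
      have hxvμ₀ : x (t + z * T) = μ₀ := hbelow _ hvt₀
      obtain ⟨Tv, hTv, hv2⟩ := hLup c (t + z * T) hcL hzc
      have hsb : t₀ - Tv < t + z * T := hself _ Tv hTv hv2 hvt₀
      have h1 : x (t + Tv) = μ := by
        have h0 := hv2 t (by linarith) hxt 1 (by push_cast; linarith)
        rwa [show t + ((1 : ℤ) : ℝ) * Tv = t + Tv by push_cast; ring] at h0
      have h2 : x (t + z * T + Tv) = μ := by
        have h0 := hβmem (t + Tv) (by linarith) h1 z (by linarith)
        rwa [show t + Tv + (z : ℝ) * T = t + (z : ℝ) * T + Tv by ring] at h0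
      have h3 : x (t + z * T) = μ := by
        have h0 := hv2 (t + z * T + Tv) (by linarith) h2 (-1) (by push_cast; linarith)
        rwa [show t + (z : ℝ) * T + Tv + ((-1 : ℤ) : ℝ) * Tv = t + (z : ℝ) * T by
          push_cast; ring] at h0
      exact hμeq (h3.symm.trans hxvμ₀)
  -- assemble
  refine ⟨β, t₀, hβt₀, ?_⟩
  ext t''
  simp only [Set.mem_inter_iff, Set.mem_setOf_eq, Set.mem_Ico]
  constructor
  · rintro ⟨hI, hL⟩
    have hlt : t'' < t₀ := by
      by_contra h
      exact hxt₀ (hI t₀ (le_of_not_gt h))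
    refine ⟨?_, hlt⟩
    by_contra h
    exact hchain t'' hL (lt_of_not_ge h)
  · rintro ⟨h1, h2⟩
    exact ⟨fun t ht => hbelow t (lt_of_le_of_lt ht h2),
      ⟨T, hT, fun t ht hxt z hz => hβmem t (h1.trans ht) hxt z (h1.trans hz)⟩⟩
end

section
/- Let x̂ be a discrete-time signal. Then the following are equivalent: (i) there exists an integer p ≥ 1 such that every μ ∈ Or(x̂) is a periodic point of x̂ with period p; (ii) for every μ ∈ Or(x̂) there exists an integer p ≥ 1 such that μ is a periodic point of x̂ with period p. -/
open Set Filter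

/-- The orbit of a discrete-time signal. -/
def OrD {n : ℕ} (xd : ℤ → Fin n → Bool) : Set (Fin n → Bool) :=
  {μ | ∃ k : ℤ, -1 ≤ k ∧ xd k = μ}

lemma EvPerD.of_dvd {n : ℕ} {xd : ℤ → Fin n → Bool} {μ : Fin n → Bool} {p q k' : ℤ}
    (h : EvPerD xd μ p k') (hpq : p ∣ q) : EvPerD xd μ q k' := by
  obtain ⟨c, hc⟩ := hpq
  intro k hk hxk z hz
  have hq : k + z * q = k + (z * c) * p := by rw [hc]; ring
  rw [hq] at hz ⊢
  exact h k hk hxk (z * c) hz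

/-- For a discrete-time signal, all points of the orbit are periodic with a common period
if and only if every point of the orbit is periodic with some period. -/
theorem common_period_iff_pointwise_periods {n : ℕ} (xd : ℤ → Fin n → Bool) :
    (∃ p : ℤ, 1 ≤ p ∧ ∀ μ ∈ OrD xd, EvPerD xd μ p (-1)) ↔
    (∀ μ ∈ OrD xd, ∃ p : ℤ, 1 ≤ p ∧ EvPerD xd μ p (-1)) := by
  constructor
  · rintro ⟨p, hp, h⟩ μ hμ
    exact ⟨p, hp, h μ hμ⟩
  · intro h
    choose! p hp1 hper using h
    refine ⟨∏ μ : Fin n → Bool, max 1 (p μ), ?_, ?_⟩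
    · exact Finset.prod_induction _ (1 ≤ ·) (fun a b ha hb => by nlinarith) le_rfl fun μ _ => le_max_left _ _
    · intro μ hμ
      refine (hper μ hμ).of_dvd ?_
      have : p μ = max 1 (p μ) := (max_eq_right (hp1 μ hμ)).symm
      rw [this]
      exact Finset.dvd_prod_of_mem _ (Finset.mem_univ μ)
end
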